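/- arXiv:1903.10105 — 3 statements merged into one kernel-verified Lean document; each statement's English description precedes it below -/
import Mathlib

section
/- If G is a d-graph (d ≥ 0) and there exists a locally injective function f on the vertex set of G with exactly two critical points, then G is a d-sphere. -/
attribute [local instance] Classical.propDecidable

noncomputable section

/-- A finite simple graph on a vertex type `V`: a finite vertex set together with a
symmetric, irreflexive adjacency relation supported on the vertex set. -/
structure FSGraph (V : Type) where
  verts : Finset V
  Adj : V → V → Prop
  symm : ∀ {a b}, Adj a b → Adj b a
  loopless : ∀ a, ¬ Adj a a
  supp : ∀ {a b}, Adj a b → a ∈ verts ∧ b ∈ verts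

namespace FSGraph

variable {V : Type}

/-- The subgraph induced by the set of vertices satisfying `P`. -/
def induce (G : FSGraph V) (P : V → Prop) : FSGraph V where
  verts := G.verts.filter P
  Adj a b := G.Adj a b ∧ P a ∧ P b
  symm h := ⟨G.symm h.1, h.2.2, h.2.1⟩
  loopless a h := G.loopless a h.1
  supp h := ⟨Finset.mem_filter.mpr ⟨(G.supp h.1).1, h.2.1⟩,
             Finset.mem_filter.mpr ⟨(G.supp h.1).2, h.2.2⟩⟩

/-- The unit sphere `S(x)`: the subgraph induced by the neighbours of `x`. -/
def sphere (G : FSGraph V) (x : V) : FSGraph V := G.induce (fun y => G.Adj x y)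

/-- `G - x`: the subgraph induced by all vertices different from `x`. -/
def remove (G : FSGraph V) (x : V) : FSGraph V := G.induce (fun y => y ≠ x)

/-- Contractibility (in the sense of Evako/Knill): the one-point graph `K₁` is
contractible, and a graph is contractible if some vertex `x` has both `S(x)` and
`G - x` contractible.  The empty graph is not contractible. -/
inductive Contractible : FSGraph V → Prop
  | single (G : FSGraph V) (x : V) (h : G.verts = {x}) : Contractible G
  | step (G : FSGraph V) (x : V) (hx : x ∈ G.verts)
      (hS : Contractible (G.sphere x)) (hR : Contractible (G.remove x)) :
      Contractible G

/-- `IsSphere d G`: `G` is a `d`-sphere.  The empty graph is the `(-1)`-sphere; for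
`d ≥ 0`, a `d`-sphere is a nonempty graph all of whose unit spheres are
`(d-1)`-spheres (i.e. a `d`-graph) which becomes contractible after removing some
vertex. -/
inductive IsSphere : ℤ → FSGraph V → Prop
  | empty (G : FSGraph V) (h : G.verts = ∅) : IsSphere (-1) G
  | succ (d : ℤ) (G : FSGraph V) (hd : 0 ≤ d) (hne : G.verts.Nonempty)
      (hunit : ∀ x ∈ G.verts, IsSphere (d - 1) (G.sphere x))
      (hpunct : ∃ x ∈ G.verts, Contractible (G.remove x)) :
      IsSphere d G

/-- A `d`-graph: a nonempty graph all of whose unit spheres are `(d-1)`-spheres. -/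
def IsDGraph (d : ℤ) (G : FSGraph V) : Prop :=
  G.verts.Nonempty ∧ ∀ x ∈ G.verts, IsSphere (d - 1) (G.sphere x)

/-- A `d`-ball: a graph of the form `G - x` with `G` a `d`-sphere and `x` a vertex. -/
def IsBall (d : ℤ) (B : FSGraph V) : Prop :=
  ∃ (G : FSGraph V) (x : V), IsSphere d G ∧ x ∈ G.verts ∧ B = G.remove x

/-- `f` is locally injective (a coloring): adjacent vertices get different values. -/
def LocallyInjective (G : FSGraph V) (f : V → ℝ) : Prop :=
  ∀ a b, G.Adj a b → f a ≠ f b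

/-- `S_f^-(x)`: the subgraph of `S(x)` induced by `{y ∈ S(x) : f y < f x}`. -/
def subSphere (G : FSGraph V) (f : V → ℝ) (x : V) : FSGraph V :=
  (G.sphere x).induce (fun y => f y < f x)

/-- `S_f^+(x)`: the subgraph of `S(x)` induced by `{y ∈ S(x) : f y > f x}`. -/
def supSphere (G : FSGraph V) (f : V → ℝ) (x : V) : FSGraph V :=
  (G.sphere x).induce (fun y => f x < f y)

/-- `x` is a critical point of `f` if at least one of `S_f^-(x)`, `S_f^+(x)` is
not contractible. -/
def IsCritical (G : FSGraph V) (f : V → ℝ) (x : V) : Prop :=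
  ¬ Contractible (G.subSphere f x) ∨ ¬ Contractible (G.supSphere f x)

/-- `f` has exactly two critical points on the vertex set of `G`. -/
def ExactlyTwoCriticalPoints (G : FSGraph V) (f : V → ℝ) : Prop :=
  ∃ a b, a ∈ G.verts ∧ b ∈ G.verts ∧ a ≠ b ∧
    G.IsCritical f a ∧ G.IsCritical f b ∧
    ∀ x ∈ G.verts, G.IsCritical f x → x = a ∨ x = b

/-- A simplex of `G`: a nonempty complete subgraph, given by its vertex set. -/
def IsSimplex (G : FSGraph V) (s : Finset V) : Prop :=
  s.Nonempty ∧ s ⊆ G.verts ∧ ∀ a ∈ s, ∀ b ∈ s, a ≠ b → G.Adj a b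

/-- The finite set of simplices (nonempty complete subgraphs) of `G`. -/
def simplices (G : FSGraph V) : Finset (Finset V) :=
  G.verts.powerset.filter (fun s => G.IsSimplex s)

/-- The Barycentric refinement `G'`: vertices are the simplices of `G`, two simplices
being adjacent when one is a proper subset of the other. -/
def barycentric (G : FSGraph V) : FSGraph (Finset V) where
  verts := G.simplices
  Adj s t := G.IsSimplex s ∧ G.IsSimplex t ∧ (s ⊂ t ∨ t ⊂ s)
  symm h := ⟨h.2.1, h.1, h.2.2.symm⟩
  loopless s h := by
    rcases h.2.2 with h' | h' <;> exact ssubset_irrefl s h'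
  supp {s t} h :=
    ⟨Finset.mem_filter.mpr ⟨Finset.mem_powerset.mpr h.1.2.1, h.1⟩,
     Finset.mem_filter.mpr ⟨Finset.mem_powerset.mpr h.2.1.2.1, h.2.1⟩⟩

/-- The level surface `{f = c}` in the Barycentric refinement `G'`: the subgraph of
`G'` induced by the simplices on which `f - c` takes both positive and negative
values. -/
def levelSurface (G : FSGraph V) (f : V → ℝ) (c : ℝ) : FSGraph (Finset V) :=
  G.barycentric.induce (fun s => (∃ a ∈ s, f a < c) ∧ (∃ b ∈ s, c < f b))

/-- `{f ≤ c}` in `G'`: the subgraph of `G'` induced by the simplices on which `f < c`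
everywhere, together with those on which `f - c` takes both signs. -/
def subLevel (G : FSGraph V) (f : V → ℝ) (c : ℝ) : FSGraph (Finset V) :=
  G.barycentric.induce
    (fun s => (∀ a ∈ s, f a < c) ∨ ((∃ a ∈ s, f a < c) ∧ (∃ b ∈ s, c < f b)))

/-- `{f ≥ c}` in `G'`: the subgraph of `G'` induced by the simplices on which `f > c`
everywhere, together with those on which `f - c` takes both signs. -/
def supLevel (G : FSGraph V) (f : V → ℝ) (c : ℝ) : FSGraph (Finset V) :=
  G.barycentric.induce
    (fun s => (∀ a ∈ s, c < f a) ∨ ((∃ a ∈ s, f a < c) ∧ (∃ b ∈ s, c < f b)))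

/-- The center manifold `B_f(x) = {f = f x}` inside the Barycentric refinement
`S(x)'` of the unit sphere `S(x)`. -/
def centerManifold (G : FSGraph V) (f : V → ℝ) (x : V) : FSGraph (Finset V) :=
  (G.sphere x).levelSurface f (f x)

/-- Euler characteristic: `χ(G) = Σ_k (-1)^k c_k(G)` where `c_k(G)` counts the
complete subgraphs with `k+1` vertices; equivalently the sum of `(-1)^(|s|-1)` over
all simplices `s`. -/
def euler (G : FSGraph V) : ℤ :=
  ∑ s ∈ G.simplices, (-1 : ℤ) ^ (s.card - 1)

-- ==== aux lemmas ====

lemma ext' {G H : FSGraph V} (hv : G.verts = H.verts)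
    (ha : ∀ a b, G.Adj a b ↔ H.Adj a b) : G = H := by
  cases G; cases H
  simp only at hv ha
  congr 1
  funext a b
  exact propext (ha a b)

lemma induce_induce (G : FSGraph V) (P Q : V → Prop) :
    (G.induce P).induce Q = G.induce (fun y => P y ∧ Q y) := by
  refine ext' ?_ ?_
  · ext z; simp [induce]; tauto
  · intro a b
    simp only [induce]
    tauto

lemma induce_congr (G : FSGraph V) {P Q : V → Prop}
    (h : ∀ y ∈ G.verts, P y ↔ Q y) : G.induce P = G.induce Q := by
  refine ext' ?_ ?_
  · exact Finset.filter_congr (by intro y hy; simp [h y hy])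
  · intro a b
    constructor
    · rintro ⟨had, hpa, hpb⟩
      exact ⟨had, (h a (G.supp had).1).mp hpa, (h b (G.supp had).2).mp hpb⟩
    · rintro ⟨had, hqa, hqb⟩
      exact ⟨had, (h a (G.supp had).1).mpr hqa, (h b (G.supp had).2).mpr hqb⟩

lemma Contractible.nonempty {G : FSGraph V} (h : Contractible G) : G.verts.Nonempty := by
  induction h with
  | single G x h => exact ⟨x, h ▸ Finset.mem_singleton_self x⟩
  | step G x hx _ _ _ _ => exact ⟨x, hx⟩

lemma not_contractible_of_empty {G : FSGraph V} (h : G.verts = ∅) : ¬ Contractible G := by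
  intro hc
  rcases hc.nonempty with ⟨x, hx⟩
  simp [h] at hx

/-- Key build-up lemma. -/
lemma build (G : FSGraph V) (f : V → ℝ) (hf : G.LocallyInjective f) (a : V)
    (ha : a ∈ G.verts) :
    ∀ (n : ℕ) (P : V → Prop), (G.verts.filter P).card ≤ n → P a →
      (∀ x y, G.Adj x y → f y < f x → P x → P y) →
      (∀ x ∈ G.verts, P x → x ≠ a → f a < f x) →
      (∀ x ∈ G.verts, P x → x ≠ a → Contractible (G.subSphere f x)) →
      Contractible (G.induce P) := by
  intro n
  induction n with
  | zero =>
    intro P hcard hPa _ _ _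
    exfalso
    have : a ∈ G.verts.filter P := Finset.mem_filter.mpr ⟨ha, hPa⟩
    have := Finset.card_pos.mpr ⟨a, this⟩
    omega
  | succ n ih =>
    intro P hcard hPa hdc hmin hreg
    set S := G.verts.filter P with hS
    have haS : a ∈ S := Finset.mem_filter.mpr ⟨ha, hPa⟩
    by_cases hone : S = {a}
    · exact Contractible.single _ a hone
    · -- pick x ∈ S \ {a} with maximal f
      have hne : (S.erase a).Nonempty := by
        by_contra h
        rw [Finset.not_nonempty_iff_eq_empty] at h
        apply hone
        apply Finset.eq_singleton_iff_unique_mem.mpr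
        refine ⟨haS, fun z hz => ?_⟩
        by_contra hza
        have : z ∈ S.erase a := Finset.mem_erase.mpr ⟨hza, hz⟩
        simp [h] at this
      obtain ⟨x, hxE, hxmax⟩ := Finset.exists_max_image (S.erase a) f hne
      have hxa : x ≠ a := (Finset.mem_erase.mp hxE).1
      have hxS : x ∈ S := (Finset.mem_erase.mp hxE).2
      have hxV : x ∈ G.verts := (Finset.mem_filter.mp hxS).1
      have hPx : P x := (Finset.mem_filter.mp hxS).2
      -- x maximal over all of S
      have hmaxS : ∀ y ∈ S, f y ≤ f x := by
        intro y hy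
        by_cases hya : y = a
        · subst hya; exact le_of_lt (hmin x hxV hPx hxa)
        · exact hxmax y (Finset.mem_erase.mpr ⟨hya, hy⟩)
      -- sphere of x in induce P equals subSphere f x
      have E1 : (G.induce P).sphere x = G.subSphere f x := by
        show (G.induce P).induce _ = (G.sphere x).induce _
        rw [induce_induce, sphere, induce_induce]
        apply induce_congr
        intro y hy
        constructor
        · rintro ⟨hPy, hadj, -, -⟩
          have hle : f y ≤ f x := hmaxS y (Finset.mem_filter.mpr ⟨hy, hPy⟩)
          exact ⟨hadj, lt_of_le_of_ne hle (fun h => hf x y hadj h.symm)⟩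
        · rintro ⟨hadj, hlt⟩
          exact ⟨hdc x y hadj hlt hPx, hadj, hPx, hdc x y hadj hlt hPx⟩
      have E2 : (G.induce P).remove x = G.induce (fun y => P y ∧ y ≠ x) := by
        show (G.induce P).induce _ = _
        rw [induce_induce]
      refine Contractible.step _ x hxS ?_ ?_
      · rw [E1]; exact hreg x hxV hPx hxa
      · rw [E2]
        refine ih (fun y => P y ∧ y ≠ x) ?_ ⟨hPa, fun h => hxa h.symm⟩ ?_ ?_ ?_
        · refine le_trans (b := (S.erase x).card) (Finset.card_le_card ?_) ?_
          · intro z hz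
            simp only [Finset.mem_filter] at hz
            exact Finset.mem_erase.mpr ⟨hz.2.2, Finset.mem_filter.mpr ⟨hz.1, hz.2.1⟩⟩
          · have h2 := Finset.card_erase_of_mem hxS
            omega
        · rintro u y hadj hlt ⟨hPu, -⟩
          refine ⟨hdc u y hadj hlt hPu, ?_⟩
          rintro rfl
          have huS : u ∈ S := Finset.mem_filter.mpr ⟨(G.supp hadj).1, hPu⟩
          exact absurd (lt_of_lt_of_le hlt (hmaxS u huS)) (lt_irrefl _)
        · intro z hz hPz hza
          exact hmin z hz hPz.1 hza
        · intro z hz hPz hza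
          exact hreg z hz hPz.1 hza

end FSGraph

/-- If `G` is a `d`-graph (`d ≥ 0`) admitting a locally injective function `f` with
exactly two critical points, then `G` is a `d`-sphere. -/
theorem two_critical_points_implies_sphere {V : Type} (d : ℤ) (hd : 0 ≤ d)
    (G : FSGraph V) (hG : FSGraph.IsDGraph d G) (f : V → ℝ)
    (hf : G.LocallyInjective f) (h2 : G.ExactlyTwoCriticalPoints f) :
    FSGraph.IsSphere d G := by
  classical
  obtain ⟨a, b, ha, hb, hab, hca, hcb, hex⟩ := h2
  obtain ⟨hne, hunit⟩ := hG
  -- min and max of f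
  obtain ⟨m, hm, hmmin⟩ := Finset.exists_min_image G.verts f hne
  obtain ⟨M, hM, hMmax⟩ := Finset.exists_max_image G.verts f hne
  -- any vertex attaining the minimum value is critical
  have crit_of_min : ∀ x ∈ G.verts, (∀ y ∈ G.verts, f x ≤ f y) → G.IsCritical f x := by
    intro x hx hxmin
    left
    apply FSGraph.not_contractible_of_empty
    rw [Finset.eq_empty_iff_forall_notMem]
    intro y hy
    simp only [FSGraph.subSphere, FSGraph.sphere, FSGraph.induce, Finset.mem_filter] at hy
    exact absurd hy.2 (not_lt.mpr (hxmin y hy.1.1))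
  have crit_of_max : ∀ x ∈ G.verts, (∀ y ∈ G.verts, f y ≤ f x) → G.IsCritical f x := by
    intro x hx hxmax
    right
    apply FSGraph.not_contractible_of_empty
    rw [Finset.eq_empty_iff_forall_notMem]
    intro y hy
    simp only [FSGraph.supSphere, FSGraph.sphere, FSGraph.induce, Finset.mem_filter] at hy
    exact absurd hy.2 (not_lt.mpr (hxmax y hy.1.1))
  by_cases hconst : ∀ x ∈ G.verts, f x = f m
  · -- f is constant: no edges, so every vertex is critical; verts = {a, b}
    have hverts : (G.remove a).verts = {b} := by
      ext z
      simp only [FSGraph.remove, FSGraph.induce, Finset.mem_filter, Finset.mem_singleton]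
      constructor
      · rintro ⟨hz, hza⟩
        have hc : G.IsCritical f z := by
          apply crit_of_min z hz
          intro y hy
          rw [hconst z hz, hconst y hy]
        rcases hex z hz hc with rfl | rfl
        · exact absurd rfl hza
        · rfl
      · rintro rfl
        exact ⟨hb, fun h => hab h.symm⟩
    exact FSGraph.IsSphere.succ d G hd hne hunit
      ⟨a, ha, FSGraph.Contractible.single _ b hverts⟩
  · push_neg at hconst
    obtain ⟨x0, hx0, hx0ne⟩ := hconst
    have hmM : f m < f M :=
      lt_of_lt_of_le (lt_of_le_of_ne (hmmin x0 hx0) (Ne.symm hx0ne)) (hMmax x0 hx0)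
    have hmMne : m ≠ M := fun h => by rw [h] at hmM; exact lt_irrefl _ hmM
    have hmab : m = a ∨ m = b := hex m hm (crit_of_min m hm hmmin)
    have hMab : M = a ∨ M = b := hex M hM (crit_of_max M hM hMmax)
    -- uniqueness of the minimum
    have humin : ∀ x ∈ G.verts, x ≠ m → f m < f x := by
      intro x hx hxm
      rcases lt_or_eq_of_le (hmmin x hx) with h | h
      · exact h
      · exfalso
        have hc : G.IsCritical f x := by
          apply crit_of_min x hx
          intro y hy
          rw [← h]; exact hmmin y hy
        have hxab := hex x hx hc
        -- m, x, M are three distinct critical points in {a,b}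
        have hxM : x ≠ M := fun hE => by rw [← hE, ← h] at hmM; exact lt_irrefl _ hmM
        rcases hmab with rfl | rfl <;> rcases hxab with rfl | rfl <;>
          rcases hMab with h3 | h3 <;> first
            | exact hxm rfl | exact hab rfl | exact hmMne h3.symm | exact hxM h3.symm
    -- all vertices other than m, M are regular
    have hreg : ∀ x ∈ G.verts, x ≠ M → x ≠ m → FSGraph.Contractible (G.subSphere f x) := by
      intro x hx hxM hxm
      by_cases hc : G.IsCritical f x
      · exfalso
        rcases hmab with rfl | rfl <;> rcases hMab with h3 | h3 <;>
          rcases hex x hx hc with rfl | rfl <;> first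
            | exact hxm rfl | exact hxM rfl | exact hmMne h3.symm
            | exact hxM h3.symm | exact hab rfl | exact hab h3.symm
      · rw [FSGraph.IsCritical] at hc
        push_neg at hc
        exact hc.1
    have hbuild : FSGraph.Contractible (G.induce (fun y => y ≠ M)) := by
      refine FSGraph.build G f hf m hm G.verts.card _ ?_ hmMne ?_ ?_ ?_
      · refine Finset.card_le_card ?_
        intro z hz
        simp only [Finset.mem_filter] at hz
        exact hz.1
      · intro x y hadj hlt _
        intro hyM
        subst hyM
        exact absurd (lt_of_lt_of_le hlt (hMmax x (G.supp hadj).1)) (lt_irrefl _)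
      · intro x hx _ hxm
        exact humin x hx hxm
      · intro x hx hxM hxm
        exact hreg x hx hxM hxm
    exact FSGraph.IsSphere.succ d G hd hne hunit ⟨M, hM, hbuild⟩
end
end

section
/- Discrete Sard property: Let G be a d-graph, f a locally injective function on its vertices, and c a real number not in the range of f. Then the level surface {f = c} in the Barycentric refinement G' is either the empty graph or a (d−1)-graph. -/
attribute [local instance] Classical.propDecidable

noncomputable section

namespace FSGraph

variable {V : Type} {W : Type}

/-! ### Basic lemmas about induced subgraphs -/

lemma mem_induce_verts {G : FSGraph V} {P : V → Prop} {a : V} :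
    a ∈ (G.induce P).verts ↔ a ∈ G.verts ∧ P a := Finset.mem_filter

lemma induce_verts_subset (G : FSGraph V) (P : V → Prop) :
    (G.induce P).verts ⊆ G.verts := Finset.filter_subset _ _

lemma mem_sphere_verts {G : FSGraph V} {x a : V} :
    a ∈ (G.sphere x).verts ↔ a ∈ G.verts ∧ G.Adj x a := Finset.mem_filter

lemma sphere_verts_subset (G : FSGraph V) (x : V) :
    (G.sphere x).verts ⊆ G.verts := Finset.filter_subset _ _

lemma mem_remove_verts {G : FSGraph V} {x a : V} :
    a ∈ (G.remove x).verts ↔ a ∈ G.verts ∧ a ≠ x := by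
  simp [remove, induce, Finset.mem_filter]

/-! ### Isomorphisms of graphs -/

/-- An isomorphism from `A` to `B`, given by a map on the whole vertex types that
restricts to a bijection of the vertex sets and transports adjacency. -/
structure Iso (A : FSGraph V) (B : FSGraph W) (φ : V → W) : Prop where
  image : A.verts.image φ = B.verts
  injOn : Set.InjOn φ A.verts
  adj : ∀ a ∈ A.verts, ∀ b ∈ A.verts, (A.Adj a b ↔ B.Adj (φ a) (φ b))

namespace Iso

lemma mem_image {A : FSGraph V} {B : FSGraph W} {φ : V → W} (h : Iso A B φ)
    {a : V} (ha : a ∈ A.verts) : φ a ∈ B.verts := by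
  rw [← h.image]; exact Finset.mem_image_of_mem _ ha

lemma exists_preimage {A : FSGraph V} {B : FSGraph W} {φ : V → W} (h : Iso A B φ)
    {b : W} (hb : b ∈ B.verts) : ∃ a ∈ A.verts, φ a = b := by
  rw [← h.image] at hb; simpa using Finset.mem_image.mp hb

/-- An isomorphism restricts to the subgraphs induced by corresponding predicates. -/
lemma induce {A : FSGraph V} {B : FSGraph W} {φ : V → W} (h : Iso A B φ)
    {P : V → Prop} {Q : W → Prop} (hPQ : ∀ a ∈ A.verts, (P a ↔ Q (φ a))) :
    Iso (A.induce P) (B.induce Q) φ where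
  image := by
    ext b
    simp only [Finset.mem_image, mem_induce_verts]
    constructor
    · rintro ⟨a, ⟨ha, hPa⟩, rfl⟩
      exact ⟨h.mem_image ha, (hPQ a ha).1 hPa⟩
    · rintro ⟨hb, hQb⟩
      obtain ⟨a, ha, rfl⟩ := h.exists_preimage hb
      exact ⟨a, ⟨ha, (hPQ a ha).2 hQb⟩, rfl⟩
  injOn := h.injOn.mono (by intro a ha; exact induce_verts_subset _ _ ha)
  adj := by
    intro a ha b hb
    have ha' := mem_induce_verts.mp ha
    have hb' := mem_induce_verts.mp hb
    simp only [FSGraph.induce]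
    rw [h.adj a ha'.1 b hb'.1, hPQ a ha'.1, hPQ b hb'.1]

lemma sphere {A : FSGraph V} {B : FSGraph W} {φ : V → W} (h : Iso A B φ)
    {x : V} (hx : x ∈ A.verts) : Iso (A.sphere x) (B.sphere (φ x)) φ :=
  h.induce (fun a ha => h.adj x hx a ha)

lemma remove {A : FSGraph V} {B : FSGraph W} {φ : V → W} (h : Iso A B φ)
    {x : V} (hx : x ∈ A.verts) : Iso (A.remove x) (B.remove (φ x)) φ :=
  h.induce (fun a ha => by
    constructor
    · intro hax hc; exact hax (h.injOn ha hx hc)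
    · intro hc hax; exact hc (by rw [hax]))

lemma contractible {A : FSGraph V}
    (hC : Contractible A) : ∀ (B : FSGraph W) (φ : V → W), Iso A B φ → Contractible B := by
  induction hC with
  | single G x hGx =>
    intro B φ h
    refine Contractible.single B (φ x) ?_
    rw [← h.image, hGx]; simp
  | step G x hx hS hR ihS ihR =>
    intro B φ h
    refine Contractible.step B (φ x) (h.mem_image hx) ?_ ?_
    · exact ihS _ _ (h.sphere hx)
    · exact ihR _ _ (h.remove hx)

lemma isSphere {A : FSGraph V} {d : ℤ} (hS : IsSphere d A) :
    ∀ (B : FSGraph W) (φ : V → W), Iso A B φ → IsSphere d B := by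
  induction hS with
  | empty G h =>
    intro B φ hiso
    exact IsSphere.empty B (by rw [← hiso.image, h]; simp)
  | succ d G hd hne hunit hpunct ih =>
    intro B φ hiso
    refine IsSphere.succ d B hd ?_ ?_ ?_
    · obtain ⟨x, hx⟩ := hne; exact ⟨φ x, hiso.mem_image hx⟩
    · intro y hy
      obtain ⟨x, hx, rfl⟩ := hiso.exists_preimage hy
      exact ih x hx _ _ (hiso.sphere hx)
    · obtain ⟨x, hx, hc⟩ := hpunct
      exact ⟨φ x, hiso.mem_image hx, Iso.contractible hc _ _ (hiso.remove hx)⟩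

end Iso

/-- Identity-map isomorphism from agreement of vertices and adjacency. -/
lemma iso_of_eq {A B : FSGraph V} (hv : A.verts = B.verts)
    (ha : ∀ a ∈ A.verts, ∀ b ∈ A.verts, (A.Adj a b ↔ B.Adj a b)) :
    Iso A B id where
  image := by simpa using hv
  injOn := Function.injective_id.injOn
  adj := ha

lemma contractible_of_iso {A : FSGraph V} {B : FSGraph W} {φ : V → W}
    (h : Iso A B φ) (hC : Contractible A) : Contractible B :=
  Iso.contractible hC B φ h

lemma isSphere_of_iso {A : FSGraph V} {B : FSGraph W} {φ : V → W} {d : ℤ}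
    (h : Iso A B φ) (hS : IsSphere d A) : IsSphere d B :=
  Iso.isSphere hS B φ h

/-! ### Cone lemma: a graph with a universal vertex is contractible -/

lemma contractible_of_universal_aux :
    ∀ (n : ℕ) (G : FSGraph V) (x : V), G.verts.card ≤ n → x ∈ G.verts →
      (∀ y ∈ G.verts, y ≠ x → G.Adj x y) → Contractible G := by
  intro n
  induction n with
  | zero =>
    intro G x hcard hx _
    exact absurd (Finset.card_pos.mpr ⟨x, hx⟩) (by omega)
  | succ n ih =>
    intro G x hcard hx hu
    by_cases hsing : G.verts = {x}
    · exact Contractible.single G x hsing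
    · have : ∃ y ∈ G.verts, y ≠ x := by
        by_contra hcon
        push_neg at hcon
        exact hsing (Finset.eq_singleton_iff_unique_mem.mpr ⟨hx, hcon⟩)
      obtain ⟨y, hy, hyx⟩ := this
      refine Contractible.step G y hy ?_ ?_
      · refine ih (G.sphere y) x ?_ ?_ ?_
        · have : (G.sphere y).verts ⊂ G.verts := by
            refine Finset.ssubset_iff_of_subset (sphere_verts_subset G y) |>.mpr ?_
            exact ⟨y, hy, fun hmem => G.loopless y (mem_sphere_verts.mp hmem).2⟩
          have := Finset.card_lt_card this
          omega
        · exact mem_sphere_verts.mpr ⟨hx, G.symm (hu y hy hyx)⟩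
        · intro z hz hzx
          obtain ⟨hzv, hyz⟩ := mem_sphere_verts.mp hz
          exact ⟨hu z hzv hzx, G.symm (hu y hy hyx), hyz⟩
      · refine ih (G.remove y) x ?_ ?_ ?_
        · have : (G.remove y).verts ⊂ G.verts := by
            refine Finset.ssubset_iff_of_subset (induce_verts_subset _ _) |>.mpr ?_
            exact ⟨y, hy, fun hmem => (mem_remove_verts.mp hmem).2 rfl⟩
          have := Finset.card_lt_card this
          omega
        · exact mem_remove_verts.mpr ⟨hx, fun h => hyx (h ▸ rfl)⟩
        · intro z hz hzx
          obtain ⟨hzv, hzy⟩ := mem_remove_verts.mp hz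
          exact ⟨hu z hzv hzx, fun h => hyx h.symm, hzy⟩

/-- A graph with a vertex adjacent to all other vertices is contractible. -/
lemma contractible_of_universal (G : FSGraph V) (x : V) (hx : x ∈ G.verts)
    (hu : ∀ y ∈ G.verts, y ≠ x → G.Adj x y) : Contractible G :=
  contractible_of_universal_aux G.verts.card G x le_rfl hx hu

end FSGraph
namespace FSGraph

variable {V : Type} {W : Type}

lemma induce_adj {G : FSGraph V} {P : V → Prop} {a b : V} :
    (G.induce P).Adj a b ↔ G.Adj a b ∧ P a ∧ P b := Iff.rfl

lemma sphere_adj {G : FSGraph V} {x a b : V} :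
    (G.sphere x).Adj a b ↔ G.Adj a b ∧ G.Adj x a ∧ G.Adj x b := Iff.rfl

lemma remove_adj {G : FSGraph V} {x a b : V} :
    (G.remove x).Adj a b ↔ G.Adj a b ∧ a ≠ x ∧ b ≠ x := Iff.rfl

lemma adj_mem_left {G : FSGraph V} {a b : V} (h : G.Adj a b) : a ∈ G.verts := (G.supp h).1
lemma adj_mem_right {G : FSGraph V} {a b : V} (h : G.Adj a b) : b ∈ G.verts := (G.supp h).2

/-- Congruence for induced subgraphs. -/
lemma induce_congr_iso {G : FSGraph V} {P Q : V → Prop}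
    (h : ∀ y ∈ G.verts, (P y ↔ Q y)) : Iso (G.induce P) (G.induce Q) id := by
  refine iso_of_eq ?_ ?_
  · ext y
    simp only [mem_induce_verts]
    exact and_congr_right fun hy => h y hy
  · intro a ha b hb
    rw [mem_induce_verts] at ha hb
    simp only [induce_adj, id]
    rw [h a ha.1, h b hb.1]

lemma induce_univ_iso {G : FSGraph V} {P : V → Prop}
    (h : ∀ y ∈ G.verts, P y) : Iso (G.induce P) G id := by
  refine iso_of_eq ?_ ?_
  · ext y; simp only [mem_induce_verts, id]
    exact ⟨fun hy => hy.1, fun hy => ⟨hy, h y hy⟩⟩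
  · intro a ha b hb
    rw [mem_induce_verts] at ha hb
    simp only [induce_adj, id]
    exact ⟨fun hy => hy.1, fun hy => ⟨hy, h a ha.1, h b hb.1⟩⟩

lemma induce_induce_iso {G : FSGraph V} {P Q R : V → Prop}
    (h : ∀ y ∈ G.verts, (P y ∧ Q y ↔ R y)) :
    Iso ((G.induce P).induce Q) (G.induce R) id := by
  refine iso_of_eq ?_ ?_
  · ext y
    simp only [mem_induce_verts, id, and_assoc]
    constructor
    · rintro ⟨hy, hP, hQ⟩; exact ⟨hy, (h y hy).1 ⟨hP, hQ⟩⟩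
    · rintro ⟨hy, hR⟩
      obtain ⟨hP, hQ⟩ := (h y hy).2 hR
      exact ⟨hy, hP, hQ⟩
  · intro a ha b hb
    simp only [mem_induce_verts] at ha hb
    simp only [induce_adj, id]
    constructor
    · rintro ⟨⟨hab, hPa, hPb⟩, hQa, hQb⟩
      exact ⟨hab, (h a ha.1.1).1 ⟨hPa, hQa⟩, (h b hb.1.1).1 ⟨hPb, hQb⟩⟩
    · rintro ⟨hab, hRa, hRb⟩
      obtain ⟨hPa, hQa⟩ := (h a ha.1.1).2 hRa
      obtain ⟨hPb, hQb⟩ := (h b hb.1.1).2 hRb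
      exact ⟨⟨hab, hPa, hPb⟩, hQa, hQb⟩

lemma iso_id_symm {A B : FSGraph V} (h : Iso A B id) : Iso B A id := by
  have hv : A.verts = B.verts := by simpa [Finset.image_id] using h.image
  refine iso_of_eq hv.symm ?_
  intro a ha b hb
  rw [← hv] at ha hb
  exact (h.adj a ha b hb).symm

/-! ### The peeling lemma -/

/-- Peeling lemma: if we can remove the vertices of a set `A` one by one (choice of
the next vertex guided by an invariant `Inv` on the set of not-yet-removed vertices),
at each stage the unit sphere of the removed vertex (in the current graph) being
contractible, and if the end result is contractible, then `G` was contractible. -/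
lemma peel (G : FSGraph V) (A : Finset V) (Inv : Finset V → Prop)
    (hA : ∀ x ∈ A, x ∈ G.verts) (hInvA : Inv A)
    (hstep : ∀ B ⊆ A, B.Nonempty → Inv B → ∃ x ∈ B,
      Contractible ((G.induce (fun y => y ∉ A ∨ y ∈ B)).sphere x) ∧
        ∀ B' : Finset V, (∀ y, y ∈ B' ↔ y ∈ B ∧ y ≠ x) → Inv B')
    (hbase : Contractible (G.induce (fun y => y ∉ A))) : Contractible G := by
  have main : ∀ (n : ℕ) (B : Finset V), B ⊆ A → B.card ≤ n → Inv B →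
      Contractible (G.induce (fun y => y ∉ A ∨ y ∈ B)) := by
    intro n
    induction n with
    | zero =>
      intro B hBA hcard _
      have hB : B = ∅ := Finset.card_eq_zero.mp (by omega)
      subst hB
      exact contractible_of_iso
        (induce_congr_iso (by intro y _; simp)) hbase
    | succ n ih =>
      intro B hBA hcard hInv
      rcases B.eq_empty_or_nonempty with rfl | hne
      · exact contractible_of_iso (induce_congr_iso (by intro y _; simp)) hbase
      · obtain ⟨x, hxB, hsph, hInv'⟩ := hstep B hBA hne hInv
        have hInvE : Inv (B.erase x) :=
          hInv' (B.erase x) (fun y => Finset.mem_erase.trans (by tauto))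
        refine Contractible.step _ x ?_ hsph ?_
        · exact mem_induce_verts.mpr ⟨hA x (hBA hxB), Or.inr hxB⟩
        · have hiso : Iso ((G.induce (fun y => y ∉ A ∨ y ∈ B)).remove x)
              (G.induce (fun y => y ∉ A ∨ y ∈ B.erase x)) id := by
            refine induce_induce_iso ?_
            intro y _
            constructor
            · rintro ⟨hy | hy, hyx⟩
              · exact Or.inl hy
              · exact Or.inr (Finset.mem_erase.mpr ⟨hyx, hy⟩)
            · rintro (hy | hy)
              · refine ⟨Or.inl hy, fun h => hy (h ▸ hBA hxB)⟩
              · exact ⟨Or.inr (Finset.mem_erase.mp hy).2, (Finset.mem_erase.mp hy).1⟩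
          exact contractible_of_iso (iso_id_symm hiso)
            (ih _ (fun y hy => hBA (Finset.mem_of_mem_erase hy))
              (by have := Finset.card_erase_of_mem hxB; omega) hInvE)
  have := main A.card A le_rfl le_rfl hInvA
  exact contractible_of_iso (induce_univ_iso (by intro y _; by_cases h : y ∈ A <;> simp [h])) this

end FSGraph
namespace FSGraph

variable {V : Type} {W : Type}

/-! ### Joins of graphs -/

/-- The join of two graphs: disjoint union together with all edges between them. -/
def join (A : FSGraph V) (B : FSGraph W) : FSGraph (V ⊕ W) where
  verts := A.verts.map ⟨Sum.inl, Sum.inl_injective⟩ ∪ B.verts.map ⟨Sum.inr, Sum.inr_injective⟩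
  Adj x y :=
    match x, y with
    | .inl a, .inl b => A.Adj a b
    | .inr a, .inr b => B.Adj a b
    | .inl a, .inr b => a ∈ A.verts ∧ b ∈ B.verts
    | .inr a, .inl b => b ∈ A.verts ∧ a ∈ B.verts
  symm := by
    rintro (a | a) (b | b) h
    · exact A.symm h
    · exact h
    · exact h
    · exact B.symm h
  loopless := by
    rintro (a | a) h
    · exact A.loopless a h
    · exact B.loopless a h
  supp := by
    rintro (a | a) (b | b) h <;>
      simp only [Finset.mem_union, Finset.mem_map, Function.Embedding.coeFn_mk] <;>
      constructor
    · exact Or.inl ⟨a, (A.supp h).1, rfl⟩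
    · exact Or.inl ⟨b, (A.supp h).2, rfl⟩
    · exact Or.inl ⟨a, h.1, rfl⟩
    · exact Or.inr ⟨b, h.2, rfl⟩
    · exact Or.inr ⟨a, h.2, rfl⟩
    · exact Or.inl ⟨b, h.1, rfl⟩
    · exact Or.inr ⟨a, (B.supp h).1, rfl⟩
    · exact Or.inr ⟨b, (B.supp h).2, rfl⟩

lemma mem_join_inl {A : FSGraph V} {B : FSGraph W} {a : V} :
    Sum.inl a ∈ (join A B).verts ↔ a ∈ A.verts := by
  simp [join]

lemma mem_join_inr {A : FSGraph V} {B : FSGraph W} {b : W} :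
    Sum.inr b ∈ (join A B).verts ↔ b ∈ B.verts := by
  simp [join]

lemma join_adj_ll {A : FSGraph V} {B : FSGraph W} {a b : V} :
    (join A B).Adj (Sum.inl a) (Sum.inl b) ↔ A.Adj a b := Iff.rfl

lemma join_adj_rr {A : FSGraph V} {B : FSGraph W} {a b : W} :
    (join A B).Adj (Sum.inr a) (Sum.inr b) ↔ B.Adj a b := Iff.rfl

lemma join_adj_lr {A : FSGraph V} {B : FSGraph W} {a : V} {b : W} :
    (join A B).Adj (Sum.inl a) (Sum.inr b) ↔ a ∈ A.verts ∧ b ∈ B.verts := Iff.rfl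

lemma join_adj_rl {A : FSGraph V} {B : FSGraph W} {a : W} {b : V} :
    (join A B).Adj (Sum.inr a) (Sum.inl b) ↔ b ∈ A.verts ∧ a ∈ B.verts := Iff.rfl

lemma join_swap_iso (A : FSGraph V) (B : FSGraph W) :
    Iso (join A B) (join B A) Sum.swap where
  image := by
    ext x
    rcases x with a | a <;>
      simp only [Finset.mem_image, mem_join_inl, mem_join_inr] <;>
      constructor
    · rintro ⟨(b|b), hb, hb'⟩ <;> simp_all [Sum.swap, mem_join_inl, mem_join_inr]
    · intro h; exact ⟨Sum.inr a, mem_join_inr.mpr h, rfl⟩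
    · rintro ⟨(b|b), hb, hb'⟩ <;> simp_all [Sum.swap, mem_join_inl, mem_join_inr]
    · intro h; exact ⟨Sum.inl a, mem_join_inl.mpr h, rfl⟩
  injOn := fun x _ y _ h => by simpa using congrArg Sum.swap h
  adj := by
    rintro (a | a) ha (b | b) hb <;>
      simp only [Sum.swap, join_adj_ll, join_adj_rr, join_adj_lr, join_adj_rl, Sum.elim_inl,
        Sum.elim_inr] <;> tauto

lemma join_inr_iso {A : FSGraph V} (B : FSGraph W) (hA : A.verts = ∅) :
    Iso B (join A B) Sum.inr where
  image := by
    ext x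
    rcases x with a | a <;> simp [join, hA]
  injOn := fun x _ y _ h => by simpa using h
  adj := fun a _ b _ => join_adj_rr.symm

lemma join_inl_iso (A : FSGraph V) {B : FSGraph W} (hB : B.verts = ∅) :
    Iso A (join A B) Sum.inl where
  image := by
    ext x
    rcases x with a | a <;> simp [join, hB]
  injOn := fun x _ y _ h => by simpa using h
  adj := fun a _ b _ => join_adj_ll.symm

lemma join_sphere_inl_iso {A : FSGraph V} {B : FSGraph W} {a : V} (ha : a ∈ A.verts) :
    Iso (join (A.sphere a) B) ((join A B).sphere (Sum.inl a)) id := by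
  refine iso_of_eq ?_ ?_
  · ext x
    rcases x with b | b <;>
      simp only [mem_join_inl, mem_join_inr, mem_sphere_verts, join_adj_ll, join_adj_lr,
        id] <;>
      tauto
  · rintro (b | b) hb (c | c) hc <;>
      simp only [mem_join_inl, mem_join_inr, mem_sphere_verts] at hb hc <;>
      simp only [sphere_adj, join_adj_ll, join_adj_rr, join_adj_lr, join_adj_rl,
        mem_sphere_verts, id] <;>
      tauto

lemma join_remove_inl_iso {A : FSGraph V} {B : FSGraph W} {a : V} :
    Iso (join (A.remove a) B) ((join A B).remove (Sum.inl a)) id := by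
  refine iso_of_eq ?_ ?_
  · ext x
    rcases x with b | b <;>
      simp only [mem_join_inl, mem_join_inr, mem_remove_verts, ne_eq, Sum.inl.injEq,
        reduceCtorEq, not_false_eq_true, and_true, id] <;>
      tauto
  · rintro (b | b) hb (c | c) hc <;>
      simp only [mem_join_inl, mem_join_inr, mem_remove_verts] at hb hc <;>
      simp only [remove_adj, join_adj_ll, join_adj_rr, join_adj_lr, join_adj_rl,
        mem_remove_verts, ne_eq, Sum.inl.injEq, Sum.inr.injEq, reduceCtorEq,
        not_false_eq_true, and_true, true_and, id] <;>
      tauto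

lemma contractible_join_left {A : FSGraph V} (B : FSGraph W) (hA : Contractible A) :
    Contractible (join A B) := by
  induction hA with
  | single G x hGx =>
    refine contractible_of_universal (join G B) (Sum.inl x) (mem_join_inl.mpr (by simp [hGx])) ?_
    rintro (y | y) hy hne
    · rw [mem_join_inl, hGx, Finset.mem_singleton] at hy
      exact absurd (congrArg Sum.inl hy) hne
    · exact join_adj_lr.mpr ⟨by simp [hGx], mem_join_inr.mp hy⟩
  | step G x hx hS hR ihS ihR =>
    refine Contractible.step (join G B) (Sum.inl x) (mem_join_inl.mpr hx) ?_ ?_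
    · exact contractible_of_iso (join_sphere_inl_iso hx) ihS
    · exact contractible_of_iso join_remove_inl_iso ihR

lemma contractible_join_right (A : FSGraph V) {B : FSGraph W} (hB : Contractible B) :
    Contractible (join A B) :=
  contractible_of_iso (join_swap_iso B A) (contractible_join_left A hB)

end FSGraph
namespace FSGraph

variable {V : Type} {W : Type}

lemma IsSphere.neg_one_le {d : ℤ} {G : FSGraph V} (h : IsSphere d G) : -1 ≤ d := by
  cases h with
  | empty => omega
  | succ d G hd => omega

lemma join_spheres_aux :
    ∀ (n : ℕ) (V W : Type) (p q : ℤ) (A : FSGraph V) (B : FSGraph W),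
      (p + q + 2).toNat ≤ n → IsSphere p A → IsSphere q B →
      IsSphere (p + q + 1) (join A B) := by
  intro n
  induction n with
  | zero =>
    intro V W p q A B hn hA hB
    have hp := hA.neg_one_le
    have hq := hB.neg_one_le
    -- then p = q = -1, both empty
    have hp1 : p = -1 := by omega
    have hq1 : q = -1 := by omega
    subst hp1; subst hq1
    cases hA with
    | empty _ hAe =>
      cases hB with
      | empty _ hBe =>
        refine (show ((-1:ℤ) + -1 + 1) = -1 by norm_num) ▸ IsSphere.empty _ ?_
        ext x
        rcases x with a | a <;> simp [mem_join_inl, mem_join_inr, hAe, hBe]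
      | succ q' _ hd => omega
    | succ p' _ hd => omega
  | succ n ih =>
    intro V W p q A B hn hA hB
    cases hA with
    | empty _ hAe =>
      have : (-1 : ℤ) + q + 1 = q := by ring
      rw [this]
      exact isSphere_of_iso (join_inr_iso B hAe) hB
    | succ p _ hpd hpne hpunit hppunct =>
      cases hB with
      | empty _ hBe =>
        have : p + -1 + 1 = p := by ring
        rw [this]
        exact isSphere_of_iso (join_inl_iso A hBe) (IsSphere.succ p A hpd hpne hpunit hppunct)
      | succ q _ hqd hqne hqunit hqpunct =>
        refine IsSphere.succ _ _ (by omega) ?_ ?_ ?_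
        · obtain ⟨a, ha⟩ := hpne
          exact ⟨Sum.inl a, mem_join_inl.mpr ha⟩
        · rintro (a | a) hx
          · rw [mem_join_inl] at hx
            have h1 : IsSphere ((p - 1) + q + 1) (join (A.sphere a) B) :=
              ih V W (p-1) q _ _ (by omega) (hpunit a hx) (IsSphere.succ q B hqd hqne hqunit hqpunct)
            have : (p - 1) + q + 1 = p + q + 1 - 1 := by ring
            rw [this] at h1
            exact isSphere_of_iso (join_sphere_inl_iso hx) h1
          · rw [mem_join_inr] at hx
            have h1 : IsSphere ((q - 1) + p + 1) (join (B.sphere a) A) :=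
              ih W V (q-1) p _ _ (by omega) (hqunit a hx)
                (IsSphere.succ p A hpd hpne hpunit hppunct)
            have heq : (q - 1) + p + 1 = p + q + 1 - 1 := by ring
            rw [heq] at h1
            have h2 := isSphere_of_iso (join_sphere_inl_iso (B := A) hx) h1
            have hmem : Sum.inl a ∈ (join B A).verts := mem_join_inl.mpr hx
            exact isSphere_of_iso ((join_swap_iso B A).sphere hmem) h2
        · obtain ⟨a, ha, hc⟩ := hppunct
          refine ⟨Sum.inl a, mem_join_inl.mpr ha, ?_⟩
          exact contractible_of_iso join_remove_inl_iso (contractible_join_left B hc)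

lemma join_spheres {p q : ℤ} {A : FSGraph V} {B : FSGraph W}
    (hA : IsSphere p A) (hB : IsSphere q B) : IsSphere (p + q + 1) (join A B) :=
  join_spheres_aux (p + q + 2).toNat V W p q A B le_rfl hA hB

end FSGraph
namespace FSGraph

variable {V : Type}

/-! ### Inclusion graphs -/

/-- A graph on `Finset V` whose adjacency relation is strict inclusion (one way or
the other) on its vertex set. -/
def InclGraph (H : FSGraph (Finset V)) : Prop :=
  ∀ a ∈ H.verts, ∀ b ∈ H.verts, (H.Adj a b ↔ (a ⊂ b ∨ b ⊂ a))

lemma InclGraph.induce {H : FSGraph (Finset V)} (h : InclGraph H) (P : Finset V → Prop) :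
    InclGraph (H.induce P) := by
  intro a ha b hb
  rw [mem_induce_verts] at ha hb
  rw [induce_adj]
  constructor
  · rintro ⟨hab, _, _⟩; exact (h a ha.1 b hb.1).mp hab
  · intro hab; exact ⟨(h a ha.1 b hb.1).mpr hab, ha.2, hb.2⟩

lemma InclGraph.sphere {H : FSGraph (Finset V)} (h : InclGraph H) (x : Finset V) :
    InclGraph (H.sphere x) := by
  intro a ha b hb
  rw [mem_sphere_verts] at ha hb
  rw [sphere_adj]
  constructor
  · rintro ⟨hab, _, _⟩; exact (h a ha.1 b hb.1).mp hab
  · intro hab; exact ⟨(h a ha.1 b hb.1).mpr hab, ha.2, hb.2⟩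

lemma InclGraph.remove {H : FSGraph (Finset V)} (h : InclGraph H) (x : Finset V) :
    InclGraph (H.remove x) := h.induce _

/-- Two inclusion graphs with the same vertex set are isomorphic via the identity. -/
lemma incl_iso {H1 H2 : FSGraph (Finset V)} (i1 : InclGraph H1) (i2 : InclGraph H2)
    (hv : H1.verts = H2.verts) : Iso H1 H2 id := by
  refine iso_of_eq hv ?_
  intro a ha b hb
  rw [i1 a ha b hb, i2 a (hv ▸ ha) b (hv ▸ hb)]

/-! ### The boundary complex of a simplex -/

/-- The boundary complex of a finite set `s`: vertices are the proper nonempty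
subsets of `s`, adjacency is strict inclusion. -/
def Bd (s : Finset V) : FSGraph (Finset V) where
  verts := s.powerset.filter (fun t => t.Nonempty ∧ t ≠ s)
  Adj t u := (t ⊂ u ∨ u ⊂ t) ∧ (t ⊆ s ∧ t.Nonempty ∧ t ≠ s) ∧ (u ⊆ s ∧ u.Nonempty ∧ u ≠ s)
  symm h := ⟨h.1.symm, h.2.2, h.2.1⟩
  loopless t h := by rcases h.1 with h' | h' <;> exact ssubset_irrefl t h'
  supp {t u} h := by
    constructor <;> rw [Finset.mem_filter, Finset.mem_powerset] <;> tauto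

lemma mem_Bd {s t : Finset V} :
    t ∈ (Bd s).verts ↔ t ⊆ s ∧ t.Nonempty ∧ t ≠ s := by
  simp only [Bd, Finset.mem_filter, Finset.mem_powerset, and_assoc]

lemma Bd_adj {s t u : Finset V} :
    (Bd s).Adj t u ↔ (t ⊂ u ∨ u ⊂ t) ∧ (t ⊆ s ∧ t.Nonempty ∧ t ≠ s) ∧
      (u ⊆ s ∧ u.Nonempty ∧ u ≠ s) := Iff.rfl

lemma Bd_incl (s : Finset V) : InclGraph (Bd s) := by
  intro a ha b hb
  rw [mem_Bd] at ha hb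
  exact ⟨fun h => h.1, fun h => ⟨h, ha, hb⟩⟩

lemma mem_sphere_induce_verts {W : Type} {G : FSGraph W} {P : W → Prop} {x a : W} :
    a ∈ ((G.induce P).sphere x).verts ↔ (a ∈ G.verts ∧ P a) ∧ (G.Adj x a ∧ P x ∧ P a) := by
  rw [mem_sphere_verts, mem_induce_verts, induce_adj]

end FSGraph
namespace FSGraph

variable {V : Type}

lemma ssubset_of_subset_ne {u x : Finset V} (h : u ⊆ x) (h' : u ≠ x) : u ⊂ x :=
  Finset.ssubset_iff_subset_ne.mpr ⟨h, h'⟩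

lemma ne_of_ssubset_subset {u x s : Finset V} (h1 : u ⊂ x) (h2 : x ⊆ s) : u ≠ s := by
  intro h
  subst h
  exact ssubset_irrefl u (lt_of_lt_of_le h1 h2)

/-- The boundary complex punctured at a vertex is contractible. -/
lemma contractible_Bd_remove :
    ∀ (n : ℕ) (s : Finset V) (v : V), s.card ≤ n → v ∈ s → 2 ≤ s.card →
      Contractible ((Bd s).remove ({v} : Finset V)) := by
  intro n
  induction n with
  | zero => intro s v hn hv hcard; omega
  | succ n ih =>
    intro s v hn hv hcard
    set G := (Bd s).remove ({v} : Finset V) with hGdef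
    have hGincl : InclGraph G := (Bd_incl s).remove _
    have hGverts : ∀ t, t ∈ G.verts ↔ (t ⊆ s ∧ t.Nonempty ∧ t ≠ s) ∧ t ≠ {v} := by
      intro t; rw [hGdef, mem_remove_verts, mem_Bd]
    set A := G.verts.filter (fun t => v ∈ t) with hAdef
    refine peel G A (fun B => ∀ t ∈ B, ∀ u ∈ A, u ⊆ t → u ∈ B)
      (fun x hx => (Finset.mem_filter.mp hx).1) (fun t ht u hu _ => hu) ?_ ?_
    · -- peeling step
      intro B hBA hBne hInv
      obtain ⟨x, hxB, hxmax⟩ := B.exists_max_image Finset.card hBne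
      have hxA := hBA hxB
      have hxG := (Finset.mem_filter.mp hxA).1
      have hvx : v ∈ x := (Finset.mem_filter.mp hxA).2
      obtain ⟨⟨hxs, hxne, hxs'⟩, hxv⟩ := (hGverts x).mp hxG
      have hxcard : 2 ≤ x.card := by
        rcases Finset.eq_singleton_or_nontrivial hvx with h | h
        · exact absurd h hxv
        · exact Finset.one_lt_card_iff_nontrivial.mpr h
      set P := fun y => y ∉ A ∨ y ∈ B with hPdef
      have hPx : P x := Or.inr hxB
      have hPu : ∀ u, u ⊆ x → u ∈ G.verts → P u := by
        intro u hux huG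
        by_cases hvu : v ∈ u
        · exact Or.inr (hInv x hxB u (Finset.mem_filter.mpr ⟨huG, hvu⟩) hux)
        · exact Or.inl (fun hmem => hvu (Finset.mem_filter.mp hmem).2)
      refine ⟨x, hxB, ?_, ?_⟩
      · refine contractible_of_iso
          (incl_iso ((Bd_incl x).remove _) ((hGincl.induce P).sphere x) ?_)
          (ih x v (by
            have := Finset.card_lt_card (ssubset_of_subset_ne hxs hxs')
            omega) hvx hxcard)
        ext u
        rw [mem_remove_verts, mem_Bd, mem_sphere_induce_verts]
        constructor
        · rintro ⟨⟨hux, hune, hux'⟩, huv⟩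
          have huss : u ⊂ x := ssubset_of_subset_ne hux hux'
          have huG : u ∈ G.verts := (hGverts u).mpr
            ⟨⟨hux.trans hxs, hune, ne_of_ssubset_subset huss hxs⟩, huv⟩
          have hadj : G.Adj x u := by
            rw [hGdef, remove_adj, Bd_adj]
            exact ⟨⟨Or.inr huss, ⟨hxs, hxne, hxs'⟩,
              ⟨hux.trans hxs, hune, ne_of_ssubset_subset huss hxs⟩⟩, hxv, huv⟩
          exact ⟨⟨huG, hPu u hux huG⟩, hadj, hPx, hPu u hux huG⟩
        · rintro ⟨⟨huG, hPu'⟩, hadj, -, -⟩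
          have hincl := (hGincl x hxG u huG).mp hadj
          obtain ⟨⟨hus, hune, hus'⟩, huv⟩ := (hGverts u).mp huG
          rcases hincl with hxu | hux
          · -- x ⊂ u is impossible: u would still be in B, contradicting maximality
            exfalso
            have huA : u ∈ A := Finset.mem_filter.mpr ⟨huG, hxu.subset hvx⟩
            have huB : u ∈ B := hPu'.elim (fun h => absurd huA h) id
            have := hxmax u huB
            have := Finset.card_lt_card hxu
            omega
          · exact ⟨⟨hux.subset, hune, hux.ne⟩, huv⟩
      · -- invariant preserved
        intro B' hB' t htB' u huA hut
        have htB := ((hB' t).mp htB').1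
        have huB := hInv t htB u huA hut
        refine (hB' u).mpr ⟨huB, ?_⟩
        rintro rfl
        have h1 := hxmax t htB
        have h2 := Finset.eq_of_subset_of_card_le hut h1
        exact ((hB' t).mp htB').2 h2.symm
    · -- base case: cone over s.erase v with apex s.erase v
      have hwholeG : (s.erase v) ∈ (G.induce (fun y => y ∉ A)).verts := by
        rw [mem_induce_verts, hGverts]
        have h1 : s.erase v ⊆ s := Finset.erase_subset _ _
        have h2 : (s.erase v).Nonempty := by
          rw [← Finset.card_pos, Finset.card_erase_of_mem hv]; omega
        have h3 : s.erase v ≠ s := by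
          intro h
          have := Finset.card_erase_of_mem hv
          rw [h] at this; omega
        have h4 : s.erase v ≠ {v} := by
          intro h
          have : v ∈ s.erase v := h ▸ Finset.mem_singleton_self v
          exact (Finset.notMem_erase v s) this
        refine ⟨⟨⟨h1, h2, h3⟩, h4⟩, ?_⟩
        rw [hAdef, Finset.mem_filter]
        push_neg
        intro _
        exact Finset.notMem_erase v s
      refine contractible_of_universal _ (s.erase v) hwholeG ?_
      intro y hy hne
      obtain ⟨hyG, hyP⟩ := mem_induce_verts.mp hy
      obtain ⟨⟨hys, hyne, hys'⟩, hyv⟩ := (hGverts y).mp hyG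
      have hvy : v ∉ y := by
        intro hvy
        exact hyP (Finset.mem_filter.mpr ⟨hyG, hvy⟩)
      have hsub : y ⊆ s.erase v := fun a hay =>
        Finset.mem_erase.mpr ⟨fun h => hvy (h ▸ hay), hys hay⟩
      have hss : y ⊂ s.erase v := ssubset_of_subset_ne hsub hne
      exact ((hGincl.induce _) _ hwholeG _ hy).mpr (Or.inr hss)

end FSGraph
namespace FSGraph

variable {V : Type}

lemma union_ssubset_union_iff {t a b : Finset V} (ha : Disjoint t a) (hb : Disjoint t b) :
    (t ∪ a ⊂ t ∪ b) ↔ a ⊂ b := by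
  constructor
  · intro h
    rw [Finset.ssubset_iff_subset_ne] at h ⊢
    constructor
    · intro x hx
      have hxt : x ∉ t := Finset.disjoint_right.mp ha hx
      have := h.1 (Finset.mem_union_right t hx)
      rcases Finset.mem_union.mp this with h' | h'
      · exact absurd h' hxt
      · exact h'
    · rintro rfl; exact h.2 rfl
  · intro h
    rw [Finset.ssubset_iff_subset_ne] at h ⊢
    refine ⟨Finset.union_subset_union_right h.1, ?_⟩
    intro heq
    apply h.2
    have h1 : a = (t ∪ a) \ t := (Finset.union_sdiff_cancel_left ha).symm
    have h2 : b = (t ∪ b) \ t := (Finset.union_sdiff_cancel_left hb).symm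
    rw [h1, h2, heq]

lemma disjoint_of_subset_sdiff {t w s : Finset V} (h : w ⊆ s \ t) : Disjoint t w :=
  Finset.disjoint_left.mpr fun {a} hat haw => (Finset.mem_sdiff.mp (h haw)).2 hat

/-- The unit sphere of `t` in the boundary complex of `s` is the join of the
boundary complex of `t` with the boundary complex of `s \ t`. -/
lemma Bd_sphere_iso {s t : Finset V} (ht : t ∈ (Bd s).verts) :
    Iso (join (Bd t) (Bd (s \ t))) ((Bd s).sphere t) (Sum.elim id (fun w => t ∪ w)) := by
  obtain ⟨hts, htne, htns⟩ := mem_Bd.mp ht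
  have hBdmem : ∀ u, u ∈ (Bd t).verts → u ∈ ((Bd s).sphere t).verts := by
    intro u hu
    obtain ⟨hut, hune, hunet⟩ := mem_Bd.mp hu
    have huss : u ⊂ t := ssubset_of_subset_ne hut hunet
    have humem : u ∈ (Bd s).verts :=
      mem_Bd.mpr ⟨hut.trans hts, hune, ne_of_ssubset_subset huss hts⟩
    exact mem_sphere_verts.mpr ⟨humem, ((Bd_incl s) t ht u humem).mpr (Or.inr huss)⟩
  have hBdmem' : ∀ w, w ∈ (Bd (s \ t)).verts → t ∪ w ∈ ((Bd s).sphere t).verts := by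
    intro w hw
    obtain ⟨hws, hwne, hwnet⟩ := mem_Bd.mp hw
    have hsub : t ∪ w ⊆ s := Finset.union_subset hts (hws.trans (Finset.sdiff_subset))
    have hss : t ⊂ t ∪ w := by
      rw [Finset.ssubset_iff_subset_ne]
      refine ⟨Finset.subset_union_left, ?_⟩
      intro h
      obtain ⟨a, haw⟩ := hwne
      have : a ∈ t := h ▸ Finset.mem_union_right t haw
      exact (Finset.mem_sdiff.mp (hws haw)).2 this
    have hne : t ∪ w ≠ s := by
      intro h
      apply hwnet
      refine subset_antisymm hws ?_
      intro a hasd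
      obtain ⟨has, hant⟩ := Finset.mem_sdiff.mp hasd
      rcases Finset.mem_union.mp (h ▸ has : a ∈ t ∪ w) with h' | h'
      · exact absurd h' hant
      · exact h' 
    have humem : t ∪ w ∈ (Bd s).verts :=
      mem_Bd.mpr ⟨hsub, htne.mono Finset.subset_union_left, hne⟩
    exact mem_sphere_verts.mpr ⟨humem, ((Bd_incl s) t ht _ humem).mpr (Or.inl hss)⟩
  refine { image := ?_, injOn := ?_, adj := ?_ }
  · ext u
    simp only [Finset.mem_image]
    constructor
    · rintro ⟨x, hx, rfl⟩
      rcases x with w | w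
      · exact hBdmem w (mem_join_inl.mp hx)
      · exact hBdmem' w (mem_join_inr.mp hx)
    · intro hu
      obtain ⟨humem, hadj⟩ := mem_sphere_verts.mp hu
      obtain ⟨hus, hune, huns⟩ := mem_Bd.mp humem
      rcases ((Bd_incl s) t ht u humem).mp hadj with hss | hss
      · -- t ⊂ u, comes from inr (u \ t)
        refine ⟨Sum.inr (u \ t), mem_join_inr.mpr (mem_Bd.mpr ⟨?_, ?_, ?_⟩), ?_⟩
        · exact Finset.sdiff_subset_sdiff hus (le_refl t)
        · rw [Finset.sdiff_nonempty]
          exact fun h => (ssubset_irrefl t) (lt_of_lt_of_le hss h)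
        · intro h
          apply huns
          have h1 : t ∪ (u \ t) = u := Finset.union_sdiff_of_subset hss.subset
          have h2 : t ∪ (s \ t) = s := Finset.union_sdiff_of_subset hts
          rw [← h1, h, h2]
        · exact Finset.union_sdiff_of_subset hss.subset
      · exact ⟨Sum.inl u, mem_join_inl.mpr (mem_Bd.mpr ⟨hss.subset, hune, hss.ne⟩), rfl⟩
  · rintro (a | a) ha (b | b) hb heq <;>
      simp only [Finset.coe_union, Set.mem_union, Finset.mem_coe, mem_join_inl, mem_join_inr,
        Sum.elim_inl, Sum.elim_inr, id] at *
    · exact congrArg Sum.inl heq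
    · -- a ⊂ t and a = t ∪ b : contradiction
      exfalso
      obtain ⟨hat, -, hanet⟩ := mem_Bd.mp ha
      have : t ⊆ a := heq ▸ Finset.subset_union_left
      exact hanet (subset_antisymm hat this)
    · exfalso
      obtain ⟨hbt, -, hbnet⟩ := mem_Bd.mp hb
      have : t ⊆ b := heq ▸ Finset.subset_union_left
      exact hbnet (subset_antisymm hbt this)
    · obtain ⟨has, -, -⟩ := mem_Bd.mp ha
      obtain ⟨hbs, -, -⟩ := mem_Bd.mp hb
      have h1 := Finset.union_sdiff_cancel_left (disjoint_of_subset_sdiff has)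
      have h2 := Finset.union_sdiff_cancel_left (disjoint_of_subset_sdiff hbs)
      rw [← h1, ← h2, heq]
  · rintro (a | a) ha (b | b) hb <;>
      simp only [Sum.elim_inl, Sum.elim_inr, id]
    · rw [mem_join_inl] at ha hb
      rw [join_adj_ll, (Bd_incl t) a ha b hb,
        ((Bd_incl s).sphere t) a (hBdmem a ha) b (hBdmem b hb)]
    · rw [mem_join_inl] at ha; rw [mem_join_inr] at hb
      rw [show (join (Bd t) (Bd (s \ t))).Adj (Sum.inl a) (Sum.inr b) ↔
          (a ∈ (Bd t).verts ∧ b ∈ (Bd (s \ t)).verts) from Iff.rfl,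
        ((Bd_incl s).sphere t) a (hBdmem a ha) _ (hBdmem' b hb)]
      obtain ⟨hat, -, hanet⟩ := mem_Bd.mp ha
      constructor
      · intro _
        exact Or.inl (lt_of_lt_of_le (ssubset_of_subset_ne hat hanet) Finset.subset_union_left)
      · intro _; exact ⟨ha, hb⟩
    · rw [mem_join_inr] at ha; rw [mem_join_inl] at hb
      rw [show (join (Bd t) (Bd (s \ t))).Adj (Sum.inr a) (Sum.inl b) ↔
          (b ∈ (Bd t).verts ∧ a ∈ (Bd (s \ t)).verts) from Iff.rfl,
        ((Bd_incl s).sphere t) _ (hBdmem' a ha) b (hBdmem b hb)]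
      obtain ⟨hbt, -, hbnet⟩ := mem_Bd.mp hb
      constructor
      · intro _
        exact Or.inr (lt_of_lt_of_le (ssubset_of_subset_ne hbt hbnet) Finset.subset_union_left)
      · intro _; exact ⟨hb, ha⟩
    · rw [mem_join_inr] at ha hb
      rw [join_adj_rr, (Bd_incl (s \ t)) a ha b hb,
        ((Bd_incl s).sphere t) _ (hBdmem' a ha) _ (hBdmem' b hb)]
      obtain ⟨has, -, -⟩ := mem_Bd.mp ha
      obtain ⟨hbs, -, -⟩ := mem_Bd.mp hb
      rw [union_ssubset_union_iff (disjoint_of_subset_sdiff has) (disjoint_of_subset_sdiff hbs),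
        union_ssubset_union_iff (disjoint_of_subset_sdiff hbs) (disjoint_of_subset_sdiff has)]

/-- The boundary complex of a nonempty set `s` is a `(|s| - 2)`-sphere. -/
lemma Bd_isSphere : ∀ (n : ℕ) (s : Finset V), s.card ≤ n → s.Nonempty →
    IsSphere ((s.card : ℤ) - 2) (Bd s) := by
  intro n
  induction n with
  | zero =>
    intro s hn hne
    have := Finset.card_pos.mpr hne
    omega
  | succ n ih =>
    intro s hn hne
    by_cases hcard : s.card = 1
    · have hverts : (Bd s).verts = ∅ := by
        obtain ⟨v, rfl⟩ := Finset.card_eq_one.mp hcard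
        ext t
        simp only [mem_Bd, Finset.notMem_empty, iff_false, not_and]
        intro hts htne
        rcases Finset.subset_singleton_iff.mp hts with rfl | rfl
        · exact absurd rfl htne.ne_empty
        · exact fun h => h rfl
      rw [hcard]
      norm_num
      exact IsSphere.empty _ hverts
    · have hcard2 : 2 ≤ s.card := by
        have := Finset.card_pos.mpr hne; omega
      obtain ⟨v, hv⟩ := hne
      refine IsSphere.succ _ _ (by omega) ⟨({v} : Finset V), ?_⟩ ?_ ?_
      · refine mem_Bd.mpr ⟨Finset.singleton_subset_iff.mpr hv, Finset.singleton_nonempty v, ?_⟩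
        intro h
        rw [← h] at hcard2
        simp at hcard2
      · intro t ht
        obtain ⟨hts, htne, htns⟩ := mem_Bd.mp ht
        have htss : t ⊂ s := ssubset_of_subset_ne hts htns
        have htcard := Finset.card_lt_card htss
        have hsdne : (s \ t).Nonempty := by
          rw [Finset.sdiff_nonempty]
          exact fun h => htns (subset_antisymm hts h)
        have hsdcard : (s \ t).card = s.card - t.card := Finset.card_sdiff_of_subset hts
        have htpos := Finset.card_pos.mpr htne
        have hS1 := ih t (by omega) htne
        have hS2 := ih (s \ t) (by omega) hsdne
        have hj := join_spheres hS1 hS2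
        have hdim : ((t.card : ℤ) - 2) + (((s \ t).card : ℤ) - 2) + 1 = (s.card : ℤ) - 2 - 1 := by
          rw [hsdcard]
          have : t.card ≤ s.card := le_of_lt htcard
          push_cast [Nat.cast_sub this]
          ring
        rw [hdim] at hj
        exact isSphere_of_iso (Bd_sphere_iso ht) hj
      · refine ⟨({v} : Finset V), ?_, contractible_Bd_remove s.card s v le_rfl hv hcard2⟩
        refine mem_Bd.mpr ⟨Finset.singleton_subset_iff.mpr hv, Finset.singleton_nonempty v, ?_⟩
        intro h
        rw [← h] at hcard2
        simp at hcard2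
end FSGraph
namespace FSGraph

variable {V : Type}

lemma mem_simplices {G : FSGraph V} {s : Finset V} :
    s ∈ G.simplices ↔ G.IsSimplex s := by
  rw [simplices, Finset.mem_filter, Finset.mem_powerset]
  exact ⟨fun h => h.2, fun h => ⟨h.2.1, h⟩⟩

lemma IsSimplex.subset {G : FSGraph V} {s t : Finset V} (hs : G.IsSimplex s)
    (hts : t ⊆ s) (htne : t.Nonempty) : G.IsSimplex t :=
  ⟨htne, (hts.trans hs.2.1), fun a ha b hb hab => hs.2.2 a (hts ha) b (hts hb) hab⟩

lemma mem_barycentric {G : FSGraph V} {s : Finset V} :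
    s ∈ G.barycentric.verts ↔ G.IsSimplex s := mem_simplices

lemma barycentric_adj {G : FSGraph V} {s t : Finset V} :
    G.barycentric.Adj s t ↔ G.IsSimplex s ∧ G.IsSimplex t ∧ (s ⊂ t ∨ t ⊂ s) := Iff.rfl

lemma barycentric_incl (G : FSGraph V) : InclGraph (G.barycentric) := by
  intro a ha b hb
  rw [mem_barycentric] at ha hb
  rw [barycentric_adj]
  tauto

/-- The link of a set of vertices: the subgraph induced by the common neighbours. -/
def link (G : FSGraph V) (s : Finset V) : FSGraph V :=
  G.induce (fun y => ∀ v ∈ s, G.Adj v y)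

lemma mem_link_verts {G : FSGraph V} {s : Finset V} {a : V} :
    a ∈ (G.link s).verts ↔ a ∈ G.verts ∧ ∀ v ∈ s, G.Adj v a := mem_induce_verts

lemma link_singleton_iso (G : FSGraph V) (v : V) :
    Iso (G.link ({v} : Finset V)) (G.sphere v) id := by
  unfold link sphere
  exact induce_congr_iso (by intro y _; simp)

lemma link_insert_iso (G : FSGraph V) (v : V) (t : Finset V) (hvt : v ∉ t)
    (hsimp : G.IsSimplex (insert v t)) :
    Iso ((G.sphere v).link t) (G.link (insert v t)) id := by
  unfold link sphere
  refine induce_induce_iso ?_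
  intro y _
  constructor
  · rintro ⟨hvy, hty⟩
    intro u hu
    rcases Finset.mem_insert.mp hu with rfl | hu
    · exact hvy
    · exact (hty u hu).1
  · intro h
    have hvy := h v (Finset.mem_insert_self v t)
    refine ⟨hvy, ?_⟩
    intro u hu
    refine ⟨h u (Finset.mem_insert_of_mem hu), ?_, hvy⟩
    exact hsimp.2.2 v (Finset.mem_insert_self v t) u (Finset.mem_insert_of_mem hu)
      (fun he => hvt (he ▸ hu))

/-- In a `d`-sphere, the link of a simplex with `k` vertices is a `(d-k)`-sphere. -/
lemma link_isSphere_sphere :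
    ∀ (k : ℕ) (G : FSGraph V) (d : ℤ) (t : Finset V), IsSphere d G → G.IsSimplex t →
      t.card = k → IsSphere (d - k) (G.link t) := by
  intro k
  induction k generalizing V with
  | zero =>
    intro G d t _ hsimp hcard
    exact absurd (Finset.card_pos.mpr hsimp.1) (by omega)
  | succ k ih =>
    intro G d t hS hsimp hcard
    obtain ⟨v, hvt⟩ := hsimp.1
    have hvG : v ∈ G.verts := hsimp.2.1 hvt
    have hsphere : IsSphere (d - 1) (G.sphere v) := by
      cases hS with
      | empty _ h => exact absurd (h ▸ hvG) (Finset.notMem_empty v)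
      | succ d G hd hne hunit hpunct => exact hunit v hvG
    by_cases hk : k = 0
    · subst hk
      have ht1 : t = {v} := by
        obtain ⟨w, hw⟩ := Finset.card_eq_one.mp hcard
        subst hw
        rw [Finset.mem_singleton] at hvt
        subst hvt
        rfl
      subst ht1
      have heq : d - ((0 + 1 : ℕ) : ℤ) = d - 1 := by push_cast; ring
      rw [heq]
      exact isSphere_of_iso (iso_id_symm (link_singleton_iso G v)) hsphere
    · have herase : t = insert v (t.erase v) := (Finset.insert_erase hvt).symm
      have hcard' : (t.erase v).card = k := by
        rw [Finset.card_erase_of_mem hvt, hcard]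
        omega
      have hsimp' : (G.sphere v).IsSimplex (t.erase v) := by
        refine ⟨Finset.card_pos.mp (by omega), ?_, ?_⟩
        · intro u hu
          obtain ⟨huv, hut⟩ := Finset.mem_erase.mp hu
          exact mem_sphere_verts.mpr ⟨hsimp.2.1 hut,
            hsimp.2.2 v hvt u hut (fun h => huv h.symm)⟩
        · intro a ha b hb hab
          obtain ⟨hav, hat⟩ := Finset.mem_erase.mp ha
          obtain ⟨hbv, hbt⟩ := Finset.mem_erase.mp hb
          exact ⟨hsimp.2.2 a hat b hbt hab,
            hsimp.2.2 v hvt a hat (fun h => hav h.symm),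
            hsimp.2.2 v hvt b hbt (fun h => hbv h.symm)⟩
      have hlink := ih (G.sphere v) (d - 1) (t.erase v) hsphere hsimp' hcard'
      have hiso := link_insert_iso G v (t.erase v) (Finset.notMem_erase v t)
        (herase ▸ hsimp)
      rw [← herase] at hiso
      have : Iso ((G.sphere v).link (t.erase v)) (G.link t) id := hiso
      have heq : d - ((k + 1 : ℕ) : ℤ) = (d - 1) - (k : ℕ) := by push_cast; ring
      rw [heq]
      exact isSphere_of_iso this hlink

/-- In a `d`-graph, the link of a simplex with `k` vertices is a `(d-k)`-sphere. -/
lemma link_isSphere_dgraph {G : FSGraph V} {d : ℤ} (hG : IsDGraph d G)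
    {s : Finset V} (hs : G.IsSimplex s) : IsSphere (d - s.card) (G.link s) := by
  obtain ⟨v, hvs⟩ := hs.1
  have hvG : v ∈ G.verts := hs.2.1 hvs
  have hsphere : IsSphere (d - 1) (G.sphere v) := hG.2 v hvG
  by_cases h1 : s = {v}
  · subst h1
    refine isSphere_of_iso (iso_id_symm (link_singleton_iso G v)) ?_
    simpa using hsphere
  · have herase : s = insert v (s.erase v) := (Finset.insert_erase hvs).symm
    have hene : (s.erase v).Nonempty := by
      rcases Finset.eq_singleton_or_nontrivial hvs with h | h
      · exact absurd h h1
      · have hc := Finset.one_lt_card_iff_nontrivial.mpr h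
        refine Finset.card_pos.mp ?_
        rw [Finset.card_erase_of_mem hvs]
        omega
    have hsimp' : (G.sphere v).IsSimplex (s.erase v) := by
      refine ⟨hene, ?_, ?_⟩
      · intro u hu
        obtain ⟨huv, hut⟩ := Finset.mem_erase.mp hu
        exact mem_sphere_verts.mpr ⟨hs.2.1 hut, hs.2.2 v hvs u hut (fun h => huv h.symm)⟩
      · intro a ha b hb hab
        obtain ⟨hav, hat⟩ := Finset.mem_erase.mp ha
        obtain ⟨hbv, hbt⟩ := Finset.mem_erase.mp hb
        exact ⟨hs.2.2 a hat b hbt hab, hs.2.2 v hvs a hat (fun h => hav h.symm),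
          hs.2.2 v hvs b hbt (fun h => hbv h.symm)⟩
    have hlink := link_isSphere_sphere (s.erase v).card (G.sphere v) (d - 1)
      (s.erase v) hsphere hsimp' rfl
    have hiso := link_insert_iso G v (s.erase v) (Finset.notMem_erase v s) (herase ▸ hs)
    rw [← herase] at hiso
    have hiso' : Iso ((G.sphere v).link (s.erase v)) (G.link s) id := hiso
    have heq : d - (s.card : ℤ) = (d - 1) - ((s.erase v).card : ℤ) := by
      rw [Finset.card_erase_of_mem hvs]
      have := Finset.card_pos.mpr hs.1
      push_cast [Nat.cast_sub (by omega : 1 ≤ s.card)]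
      ring
    rw [heq]
    exact isSphere_of_iso hiso' hlink

end FSGraph
namespace FSGraph

variable {V : Type}

lemma isSimplex_remove {G : FSGraph V} {x : V} {s : Finset V} :
    (G.remove x).IsSimplex s ↔ G.IsSimplex s ∧ x ∉ s := by
  constructor
  · rintro ⟨hne, hsub, hadj⟩
    refine ⟨⟨hne, fun a ha => (mem_remove_verts.mp (hsub ha)).1,
      fun a ha b hb hab => ((hadj a ha b hb hab).1 : G.Adj a b)⟩, ?_⟩
    intro hxs
    exact (mem_remove_verts.mp (hsub hxs)).2 rfl
  · rintro ⟨⟨hne, hsub, hadj⟩, hxs⟩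
    refine ⟨hne, fun a ha => mem_remove_verts.mpr ⟨hsub ha, fun h => hxs (h ▸ ha)⟩, ?_⟩
    intro a ha b hb hab
    exact ⟨hadj a ha b hb hab, fun h => hxs (h ▸ ha), fun h => hxs (h ▸ hb)⟩

lemma isSimplex_sphere_iff {G : FSGraph V} {x : V} {w : Finset V} :
    (G.sphere x).IsSimplex w ↔ G.IsSimplex w ∧ ∀ y ∈ w, G.Adj x y := by
  constructor
  · rintro ⟨hne, hsub, hadj⟩
    exact ⟨⟨hne, fun a ha => (mem_sphere_verts.mp (hsub ha)).1,
      fun a ha b hb hab => (hadj a ha b hb hab).1⟩,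
      fun y hy => (mem_sphere_verts.mp (hsub hy)).2⟩
  · rintro ⟨⟨hne, hsub, hadj⟩, hx⟩
    exact ⟨hne, fun a ha => mem_sphere_verts.mpr ⟨hsub ha, hx a ha⟩,
      fun a ha b hb hab => ⟨hadj a ha b hb hab, hx a ha, hx b hb⟩⟩

lemma notMem_of_isSimplex_sphere {G : FSGraph V} {x : V} {w : Finset V}
    (h : (G.sphere x).IsSimplex w) : x ∉ w := by
  intro hxw
  exact G.loopless x ((isSimplex_sphere_iff.mp h).2 x hxw)

lemma insert_ssubset_insert_iff {x : V} {a b : Finset V} (hxa : x ∉ a) (hxb : x ∉ b) :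
    (insert x a ⊂ insert x b) ↔ a ⊂ b := by
  rw [Finset.insert_eq, Finset.insert_eq]
  exact union_ssubset_union_iff (Finset.disjoint_singleton_left.mpr hxa |>.symm |>.symm)
    (by simpa using hxb) |>.trans Iff.rfl

/-- Barycentric refinement preserves contractibility. -/
lemma barycentric_contractible {H : FSGraph V} (hC : Contractible H) :
    Contractible (H.barycentric) := by
  induction hC with
  | single G x h =>
    refine Contractible.single _ ({x} : Finset V) ?_
    ext s
    rw [mem_barycentric, Finset.mem_singleton]
    constructor
    · rintro ⟨hne, hsub, -⟩
      rw [h] at hsub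
      exact (Finset.Nonempty.subset_singleton_iff hne).mp hsub
    · rintro rfl
      exact ⟨Finset.singleton_nonempty x, by rw [h], by simp⟩
  | step G x hx hS hR ihS ihR =>
    set A := G.barycentric.verts.filter (fun s => x ∈ s) with hAdef
    have hincl := barycentric_incl G
    refine peel G.barycentric A (fun B => ∀ t ∈ B, ∀ u ∈ A, t ⊆ u → u ∈ B)
      (fun s hs => (Finset.mem_filter.mp hs).1) (fun t ht u hu _ => hu) ?_ ?_
    · intro B hBA hBne hInv
      obtain ⟨s, hsB, hsmin⟩ := B.exists_min_image Finset.card hBne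
      have hsA := hBA hsB
      have hsV := (Finset.mem_filter.mp hsA).1
      have hxs : x ∈ s := (Finset.mem_filter.mp hsA).2
      have hssimp : G.IsSimplex s := mem_barycentric.mp hsV
      set P := fun y => y ∉ A ∨ y ∈ B with hPdef
      have hPs : P s := Or.inr hsB
      have hPsup : ∀ u ∈ G.barycentric.verts, s ⊆ u → P u := by
        intro u huV hsu
        refine Or.inr (hInv s hsB u ?_ hsu)
        exact Finset.mem_filter.mpr ⟨huV, hsu hxs⟩
      refine ⟨s, hsB, ?_, ?_⟩
      · by_cases hsx : s = ({x} : Finset V)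
        · -- remove the vertex {x} first: its sphere is the refinement of S(x)
          subst hsx
          refine contractible_of_iso
            (B := ((G.barycentric.induce P).sphere ({x} : Finset V)))
            (φ := fun w => insert x w) ?_ ihS
          have hmem : ∀ w, (G.sphere x).IsSimplex w →
              insert x w ∈ ((G.barycentric.induce P).sphere ({x} : Finset V)).verts := by
            intro w hw
            have hxw : x ∉ w := notMem_of_isSimplex_sphere hw
            obtain ⟨hwsimp, hwadj⟩ := isSimplex_sphere_iff.mp hw
            have hsimp : G.IsSimplex (insert x w) := by
              refine ⟨Finset.insert_nonempty x w, ?_, ?_⟩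
              · intro a ha
                rcases Finset.mem_insert.mp ha with rfl | ha
                · exact hx
                · exact hwsimp.2.1 ha
              · intro a ha b hb hab
                rcases Finset.mem_insert.mp ha with ha' | ha'
                · subst ha'
                  rcases Finset.mem_insert.mp hb with hb' | hb'
                  · exact absurd hb'.symm hab
                  · exact hwadj b hb'
                · rcases Finset.mem_insert.mp hb with hb' | hb'
                  · subst hb'
                    exact G.symm (hwadj a ha')
                  · exact hwsimp.2.2 a ha' b hb' hab
            have hss : ({x} : Finset V) ⊂ insert x w := by
              refine Finset.ssubset_iff_subset_ne.mpr ⟨by simp, ?_⟩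
              intro h
              obtain ⟨a, haw⟩ := hwsimp.1
              have : a ∈ ({x} : Finset V) := h ▸ Finset.mem_insert_of_mem haw
              rw [Finset.mem_singleton] at this
              exact hxw (this ▸ haw)
            have hmemV : insert x w ∈ G.barycentric.verts := mem_barycentric.mpr hsimp
            have hPu : P (insert x w) := hPsup _ hmemV (by simp)
            refine mem_sphere_induce_verts.mpr ⟨⟨hmemV, hPu⟩, ?_, hPs, hPu⟩
            exact (barycentric_adj).mpr ⟨mem_barycentric.mp hsV, hsimp, Or.inl hss⟩
          refine { image := ?_, injOn := ?_, adj := ?_ }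
          · ext u
            simp only [Finset.mem_image]
            constructor
            · rintro ⟨w, hw, rfl⟩
              exact hmem w (mem_barycentric.mp hw)
            · intro hu
              obtain ⟨⟨huV, hPu⟩, hadj, -, -⟩ := mem_sphere_induce_verts.mp hu
              have husimp := mem_barycentric.mp huV
              obtain ⟨-, -, hss⟩ := (barycentric_adj).mp hadj
              have hxss : ({x} : Finset V) ⊂ u := by
                rcases hss with h | h
                · exact h
                · exfalso
                  obtain ⟨a, hau⟩ := husimp.1
                  have := h.subset hau
                  rw [Finset.mem_singleton] at this
                  subst this
                  rcases Finset.ssubset_iff_subset_ne.mp h with ⟨h1, h2⟩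
                  exact h2 (subset_antisymm h1 (Finset.singleton_subset_iff.mpr hau))
              refine ⟨u.erase x, ?_, ?_⟩
              · refine mem_barycentric.mpr (isSimplex_sphere_iff.mpr ⟨?_, ?_⟩)
                · refine husimp.subset (Finset.erase_subset x u) ?_
                  rw [← Finset.card_pos, Finset.card_erase_of_mem (hxss.subset (by simp))]
                  have h2 := Finset.card_lt_card hxss
                  simp only [Finset.card_singleton] at h2
                  omega
                · intro y hy
                  obtain ⟨hyx, hyu⟩ := Finset.mem_erase.mp hy
                  exact husimp.2.2 x (hxss.subset (by simp)) y hyu (fun h => hyx h.symm)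
              · exact Finset.insert_erase (hxss.subset (by simp))
          · intro w1 hw1 w2 hw2 heq
            simp only [Finset.mem_coe, mem_barycentric] at hw1 hw2
            have h1 : x ∉ w1 := notMem_of_isSimplex_sphere hw1
            have h2 : x ∉ w2 := notMem_of_isSimplex_sphere hw2
            have heq' : insert x w1 = insert x w2 := heq
            rw [← Finset.erase_insert h1, ← Finset.erase_insert h2, heq']
          · intro w1 hw1 w2 hw2
            rw [mem_barycentric] at hw1 hw2
            have h1 : x ∉ w1 := notMem_of_isSimplex_sphere hw1
            have h2 : x ∉ w2 := notMem_of_isSimplex_sphere hw2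
            rw [(barycentric_incl (G.sphere x)) w1 (mem_barycentric.mpr hw1)
                w2 (mem_barycentric.mpr hw2),
              ((hincl.induce P).sphere _) _ (hmem w1 hw1) _ (hmem w2 hw2),
              insert_ssubset_insert_iff h1 h2, insert_ssubset_insert_iff h2 h1]
        · -- general step: the sphere has the universal vertex `s.erase x`
          have hscard : 2 ≤ s.card := by
            have h1 := Finset.card_pos.mpr ⟨x, hxs⟩
            rcases Finset.eq_singleton_or_nontrivial hxs with h | h
            · exact absurd h hsx
            · exact Finset.one_lt_card_iff_nontrivial.mpr h
          have herase_simp : G.IsSimplex (s.erase x) := by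
            refine hssimp.subset (Finset.erase_subset x s) ?_
            rw [← Finset.card_pos, Finset.card_erase_of_mem hxs]
            omega
          have heraseV : s.erase x ∈ G.barycentric.verts := mem_barycentric.mpr herase_simp
          have herase_ss : s.erase x ⊂ s := Finset.erase_ssubset hxs
          have hPe : P (s.erase x) := Or.inl (fun hmem =>
            Finset.notMem_erase x s (Finset.mem_filter.mp hmem).2)
          have hemem : s.erase x ∈ ((G.barycentric.induce P).sphere s).verts := by
            refine mem_sphere_induce_verts.mpr ⟨⟨heraseV, hPe⟩, ?_, hPs, hPe⟩
            exact (barycentric_adj).mpr ⟨hssimp, herase_simp, Or.inr herase_ss⟩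
          refine contractible_of_universal _ (s.erase x) hemem ?_
          intro u hu hune
          obtain ⟨⟨huV, hPu⟩, hadj, -, -⟩ := mem_sphere_induce_verts.mp hu
          obtain ⟨-, husimp', hss⟩ := (barycentric_adj).mp hadj
          have husimp := mem_barycentric.mp huV
          have hcomp : s.erase x ⊂ u ∨ u ⊂ s.erase x := by
            rcases hss with h | h
            · exact Or.inl (lt_of_lt_of_le herase_ss h.subset)
            · -- u ⊂ s; then x ∉ u by minimality of |s| in B
              have hxu : x ∉ u := by
                intro hxu
                have huA : u ∈ A := Finset.mem_filter.mpr ⟨huV, hxu⟩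
                have huB : u ∈ B := hPu.elim (fun hc => absurd huA hc) id
                have := hsmin u huB
                have := Finset.card_lt_card h
                omega
              refine Or.inr (Finset.ssubset_iff_subset_ne.mpr ⟨?_, hune⟩)
              intro a hau
              exact Finset.mem_erase.mpr ⟨fun he => hxu (he ▸ hau), h.subset hau⟩
          exact (((hincl.induce P).sphere s) _ hemem u hu).mpr hcomp
      · -- invariant preservation
        intro B' hB' t htB' u huA htu
        have htB := ((hB' t).mp htB').1
        have huB := hInv t htB u huA htu
        refine (hB' u).mpr ⟨huB, ?_⟩
        rintro rfl
        have h1 := hsmin t htB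
        have h2 := Finset.eq_of_subset_of_card_le htu (by omega)
        exact ((hB' t).mp htB').2 (h2 ▸ rfl)
    · -- base: what remains is the refinement of G - x
      refine contractible_of_iso
        (incl_iso (barycentric_incl (G.remove x)) (hincl.induce _) ?_) ihR
      ext s
      rw [mem_barycentric, isSimplex_remove, mem_induce_verts, mem_barycentric]
      constructor
      · rintro ⟨hsimp, hxs⟩
        exact ⟨hsimp, fun hmem => hxs (Finset.mem_filter.mp hmem).2⟩
      · rintro ⟨hsimp, hP⟩
        exact ⟨hsimp, fun hxs => hP (Finset.mem_filter.mpr ⟨mem_barycentric.mpr hsimp, hxs⟩)⟩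

end FSGraph
namespace FSGraph

variable {V : Type}

lemma isSimplex_induce {G : FSGraph V} {P : V → Prop} {w : Finset V} :
    (G.induce P).IsSimplex w ↔ G.IsSimplex w ∧ ∀ y ∈ w, P y := by
  constructor
  · rintro ⟨hne, hsub, hadj⟩
    exact ⟨⟨hne, fun a ha => (mem_induce_verts.mp (hsub ha)).1,
      fun a ha b hb hab => (hadj a ha b hb hab).1⟩,
      fun y hy => (mem_induce_verts.mp (hsub hy)).2⟩
  · rintro ⟨⟨hne, hsub, hadj⟩, hP⟩
    exact ⟨hne, fun a ha => mem_induce_verts.mpr ⟨hsub ha, hP a ha⟩,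
      fun a ha b hb hab => ⟨hadj a ha b hb hab, hP a ha, hP b hb⟩⟩

lemma isSimplex_link {G : FSGraph V} {s w : Finset V} :
    (G.link s).IsSimplex w ↔ G.IsSimplex w ∧ ∀ y ∈ w, ∀ v ∈ s, G.Adj v y :=
  isSimplex_induce

lemma link_simplex_disjoint {G : FSGraph V} {s w : Finset V}
    (hw : (G.link s).IsSimplex w) : Disjoint s w := by
  refine Finset.disjoint_right.mpr ?_
  intro y hyw hys
  exact G.loopless y ((isSimplex_link.mp hw).2 y hyw y hys)

lemma union_link_simplex {G : FSGraph V} {s w : Finset V} (hs : G.IsSimplex s)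
    (hw : (G.link s).IsSimplex w) : G.IsSimplex (s ∪ w) := by
  obtain ⟨hwsimp, hwadj⟩ := isSimplex_link.mp hw
  refine ⟨hs.1.mono Finset.subset_union_left, ?_, ?_⟩
  · intro a ha
    rcases Finset.mem_union.mp ha with h | h
    · exact hs.2.1 h
    · exact hwsimp.2.1 h
  · intro a ha b hb hab
    rcases Finset.mem_union.mp ha with ha' | ha' <;> rcases Finset.mem_union.mp hb with hb' | hb'
    · exact hs.2.2 a ha' b hb' hab
    · exact hwadj b hb' a ha'
    · exact G.symm (hwadj a ha' b hb')
    · exact hwsimp.2.2 a ha' b hb' hab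

lemma mem_barycentric_sphere_verts {G : FSGraph V} {s u : Finset V} (hs : G.IsSimplex s) :
    u ∈ (G.barycentric.sphere s).verts ↔ G.IsSimplex u ∧ (s ⊂ u ∨ u ⊂ s) := by
  rw [mem_sphere_verts, mem_barycentric, barycentric_adj]
  constructor
  · rintro ⟨h1, -, -, h3⟩
    exact ⟨h1, h3⟩
  · rintro ⟨h1, h3⟩
    exact ⟨h1, hs, h1, h3⟩

/-- The unit sphere of a simplex `s` in the barycentric refinement `G'` is the join
of the boundary complex of `s` with the refinement of the link of `s`. -/
lemma barycentric_sphere_iso {G : FSGraph V} {s : Finset V} (hs : G.IsSimplex s) :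
    Iso (join (Bd s) ((G.link s).barycentric)) (G.barycentric.sphere s)
      (Sum.elim id (fun w => s ∪ w)) := by
  have hmem1 : ∀ t, t ∈ (Bd s).verts → t ∈ (G.barycentric.sphere s).verts := by
    intro t ht
    obtain ⟨hts, htne, htns⟩ := mem_Bd.mp ht
    exact (mem_barycentric_sphere_verts hs).mpr
      ⟨hs.subset hts htne, Or.inr (ssubset_of_subset_ne hts htns)⟩
  have hmem2 : ∀ w, (G.link s).IsSimplex w → s ∪ w ∈ (G.barycentric.sphere s).verts := by
    intro w hw
    have hdisj := link_simplex_disjoint hw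
    refine (mem_barycentric_sphere_verts hs).mpr ⟨union_link_simplex hs hw, Or.inl ?_⟩
    rw [Finset.ssubset_iff_subset_ne]
    refine ⟨Finset.subset_union_left, ?_⟩
    intro h
    obtain ⟨a, haw⟩ := hw.1
    exact Finset.disjoint_right.mp hdisj haw (h ▸ Finset.mem_union_right s haw)
  refine { image := ?_, injOn := ?_, adj := ?_ }
  · ext u
    simp only [Finset.mem_image]
    constructor
    · rintro ⟨x, hx, rfl⟩
      rcases x with t | w
      · exact hmem1 t (mem_join_inl.mp hx)
      · exact hmem2 w (mem_barycentric.mp (mem_join_inr.mp hx))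
    · intro hu
      obtain ⟨husimp, hss⟩ := (mem_barycentric_sphere_verts hs).mp hu
      rcases hss with h | h
      · -- s ⊂ u : comes from inr (u \ s)
        refine ⟨Sum.inr (u \ s), mem_join_inr.mpr (mem_barycentric.mpr ?_), ?_⟩
        · refine isSimplex_link.mpr ⟨?_, ?_⟩
          · refine husimp.subset Finset.sdiff_subset ?_
            rw [Finset.sdiff_nonempty]
            exact fun hc => ssubset_irrefl s (lt_of_lt_of_le h hc)
          · intro y hy v hv
            obtain ⟨hyu, hys⟩ := Finset.mem_sdiff.mp hy
            exact husimp.2.2 v (h.subset hv) y hyu (fun he => hys (he ▸ hv))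
        · exact Finset.union_sdiff_of_subset h.subset
      · exact ⟨Sum.inl u, mem_join_inl.mpr (mem_Bd.mpr ⟨h.subset, husimp.1, h.ne⟩), rfl⟩
  · rintro (a | a) ha (b | b) hb heq <;>
      simp only [Finset.mem_coe, mem_join_inl, mem_join_inr, Sum.elim_inl, Sum.elim_inr,
        id] at *
    · exact congrArg Sum.inl heq
    · exfalso
      obtain ⟨has, -, hanes⟩ := mem_Bd.mp ha
      exact hanes (subset_antisymm has (heq ▸ Finset.subset_union_left))
    · exfalso
      obtain ⟨hbs, -, hbnes⟩ := mem_Bd.mp hb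
      exact hbnes (subset_antisymm hbs (heq.symm ▸ Finset.subset_union_left))
    · have hda := link_simplex_disjoint (mem_barycentric.mp ha)
      have hdb := link_simplex_disjoint (mem_barycentric.mp hb)
      have h1 := Finset.union_sdiff_cancel_left hda
      have h2 := Finset.union_sdiff_cancel_left hdb
      rw [← h1, ← h2, heq]
  · rintro (a | a) ha (b | b) hb <;>
      simp only [Sum.elim_inl, Sum.elim_inr, id]
    · rw [mem_join_inl] at ha; rw [mem_join_inl] at hb
      rw [join_adj_ll, (Bd_incl s) a ha b hb,
        ((barycentric_incl G).sphere s) a (hmem1 a ha) b (hmem1 b hb)]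
    · rw [mem_join_inl] at ha; rw [mem_join_inr] at hb
      rw [show (join (Bd s) ((G.link s).barycentric)).Adj (Sum.inl a) (Sum.inr b) ↔
          (a ∈ (Bd s).verts ∧ b ∈ (G.link s).barycentric.verts) from Iff.rfl,
        ((barycentric_incl G).sphere s) a (hmem1 a ha) _
          (hmem2 b (mem_barycentric.mp hb))]
      obtain ⟨has, -, hanes⟩ := mem_Bd.mp ha
      constructor
      · intro _
        exact Or.inl (lt_of_lt_of_le (ssubset_of_subset_ne has hanes) Finset.subset_union_left)
      · intro _
        exact ⟨ha, hb⟩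
    · rw [mem_join_inr] at ha; rw [mem_join_inl] at hb
      rw [show (join (Bd s) ((G.link s).barycentric)).Adj (Sum.inr a) (Sum.inl b) ↔
          (b ∈ (Bd s).verts ∧ a ∈ (G.link s).barycentric.verts) from Iff.rfl,
        ((barycentric_incl G).sphere s) _ (hmem2 a (mem_barycentric.mp ha)) b (hmem1 b hb)]
      obtain ⟨hbs, -, hbnes⟩ := mem_Bd.mp hb
      constructor
      · intro _
        exact Or.inr (lt_of_lt_of_le (ssubset_of_subset_ne hbs hbnes) Finset.subset_union_left)
      · intro _
        exact ⟨hb, ha⟩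
    · rw [mem_join_inr] at ha hb
      have hda := link_simplex_disjoint (mem_barycentric.mp ha)
      have hdb := link_simplex_disjoint (mem_barycentric.mp hb)
      rw [join_adj_rr, (barycentric_incl (G.link s)) a ha b hb,
        ((barycentric_incl G).sphere s) _ (hmem2 a (mem_barycentric.mp ha)) _
          (hmem2 b (mem_barycentric.mp hb)),
        union_ssubset_union_iff hda hdb, union_ssubset_union_iff hdb hda]

end FSGraph
namespace FSGraph

variable {V : Type}

lemma mem_Gr_verts {G : FSGraph V} {v : V} {s : Finset V} :
    s ∈ (G.barycentric.remove ({v} : Finset V)).verts ↔ G.IsSimplex s ∧ s ≠ ({v} : Finset V) := by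
  rw [mem_remove_verts, mem_barycentric]

/-- If `G - v` is contractible then `G' - {v}` is contractible. -/
lemma barycentric_remove_contractible {G : FSGraph V} {v : V}
    (hR : Contractible (G.remove v)) :
    Contractible (G.barycentric.remove ({v} : Finset V)) := by
  set Gr := G.barycentric.remove ({v} : Finset V) with hGrdef
  have hGrincl : InclGraph Gr := (barycentric_incl G).remove _
  set A := Gr.verts.filter (fun s => v ∈ s) with hAdef
  refine peel Gr A (fun B => ∀ t ∈ B, ∀ u ∈ A, u ⊆ t → u ∈ B)
    (fun s hs => (Finset.mem_filter.mp hs).1) (fun t ht u hu _ => hu) ?_ ?_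
  · intro B hBA hBne hInv
    obtain ⟨s, hsB, hsmax⟩ := B.exists_max_image Finset.card hBne
    have hsA := hBA hsB
    have hsGr := (Finset.mem_filter.mp hsA).1
    have hvs : v ∈ s := (Finset.mem_filter.mp hsA).2
    obtain ⟨hssimp, hsnev⟩ := mem_Gr_verts.mp hsGr
    have hscard : 2 ≤ s.card := by
      rcases Finset.eq_singleton_or_nontrivial hvs with h | h
      · exact absurd h hsnev
      · exact Finset.one_lt_card_iff_nontrivial.mpr h
    set P := fun y => y ∉ A ∨ y ∈ B with hPdef
    have hPs : P s := Or.inr hsB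
    refine ⟨s, hsB, ?_, ?_⟩
    · refine contractible_of_iso
        (incl_iso ((Bd_incl s).remove _) ((hGrincl.induce P).sphere s) ?_)
        (contractible_Bd_remove s.card s v le_rfl hvs hscard)
      ext u
      rw [mem_remove_verts, mem_Bd, mem_sphere_induce_verts]
      constructor
      · rintro ⟨⟨hus, hune, hunes⟩, hunev⟩
        have husimp : G.IsSimplex u := hssimp.subset hus hune
        have huGr : u ∈ Gr.verts := mem_Gr_verts.mpr ⟨husimp, hunev⟩
        have huss : u ⊂ s := ssubset_of_subset_ne hus hunes
        have hPu : P u := by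
          by_cases hvu : v ∈ u
          · exact Or.inr (hInv s hsB u (Finset.mem_filter.mpr ⟨huGr, hvu⟩) hus)
          · exact Or.inl (fun hmem => hvu (Finset.mem_filter.mp hmem).2)
        have hadj : Gr.Adj s u := by
          rw [hGrdef, remove_adj, barycentric_adj]
          exact ⟨⟨hssimp, husimp, Or.inr huss⟩, hsnev, hunev⟩
        exact ⟨⟨huGr, hPu⟩, hadj, hPs, hPu⟩
      · rintro ⟨⟨huGr, hPu⟩, hadj, -, -⟩
        obtain ⟨husimp, hunev⟩ := mem_Gr_verts.mp huGr
        rcases (hGrincl s hsGr u huGr).mp hadj with h | h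
        · exfalso
          have huA : u ∈ A := Finset.mem_filter.mpr ⟨huGr, h.subset hvs⟩
          have huB : u ∈ B := hPu.elim (fun hc => absurd huA hc) id
          have := hsmax u huB
          have := Finset.card_lt_card h
          omega
        · exact ⟨⟨h.subset, husimp.1, h.ne⟩, hunev⟩
    · intro B' hB' t htB' u huA hut
      have htB := ((hB' t).mp htB').1
      have huB := hInv t htB u huA hut
      refine (hB' u).mpr ⟨huB, ?_⟩
      rintro rfl
      have h1 := hsmax t htB
      have h2 := Finset.eq_of_subset_of_card_le hut h1
      exact ((hB' t).mp htB').2 h2.symm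
  · refine contractible_of_iso
      (incl_iso (barycentric_incl (G.remove v)) (hGrincl.induce _) ?_)
      (barycentric_contractible hR)
    ext u
    rw [mem_barycentric, isSimplex_remove, mem_induce_verts, mem_Gr_verts]
    constructor
    · rintro ⟨husimp, hvu⟩
      refine ⟨⟨husimp, ?_⟩, ?_⟩
      · rintro rfl
        exact hvu (Finset.mem_singleton_self v)
      · intro hmem
        exact hvu (Finset.mem_filter.mp hmem).2
    · rintro ⟨⟨husimp, hunev⟩, hP⟩
      refine ⟨husimp, ?_⟩
      intro hvu
      exact hP (Finset.mem_filter.mpr ⟨mem_Gr_verts.mpr ⟨husimp, hunev⟩, hvu⟩)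

/-- The barycentric refinement of a `d`-sphere is a `d`-sphere. -/
lemma barycentric_isSphere :
    ∀ (n : ℕ) {V : Type} (G : FSGraph V) (d : ℤ), IsSphere d G → (d + 1).toNat ≤ n →
      IsSphere d G.barycentric := by
  intro n
  induction n with
  | zero =>
    intro V G d hS hn
    have := hS.neg_one_le
    have hd : d = -1 := by omega
    subst hd
    cases hS with
    | empty _ h =>
      refine IsSphere.empty _ ?_
      ext s
      simp only [mem_barycentric, Finset.notMem_empty, iff_false]
      rintro ⟨hne, hsub, -⟩
      obtain ⟨a, ha⟩ := hne
      exact absurd (h ▸ hsub ha) (Finset.notMem_empty a)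
    | succ d _ hd => omega
  | succ n ih =>
    intro V G d hS hn
    cases hS with
    | empty _ h =>
      refine IsSphere.empty _ ?_
      ext s
      simp only [mem_barycentric, Finset.notMem_empty, iff_false]
      rintro ⟨hne, hsub, -⟩
      obtain ⟨a, ha⟩ := hne
      exact absurd (h ▸ hsub ha) (Finset.notMem_empty a)
    | succ d _ hd hne hunit hpunct =>
      have hSfull : IsSphere d G := IsSphere.succ d G hd hne hunit hpunct
      refine IsSphere.succ d _ hd ?_ ?_ ?_
      · obtain ⟨a, ha⟩ := hne
        exact ⟨({a} : Finset V), mem_barycentric.mpr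
          ⟨Finset.singleton_nonempty a, Finset.singleton_subset_iff.mpr ha, by simp⟩⟩
      · intro s hsV
        have hssimp : G.IsSimplex s := mem_barycentric.mp hsV
        have hk := Finset.card_pos.mpr hssimp.1
        have hBd : IsSphere ((s.card : ℤ) - 2) (Bd s) :=
          Bd_isSphere s.card s le_rfl hssimp.1
        have hlink : IsSphere (d - s.card) (G.link s) :=
          link_isSphere_sphere s.card G d s hSfull hssimp rfl
        have hlink' : IsSphere (d - s.card) (G.link s).barycentric :=
          ih (G.link s) (d - s.card) hlink (by omega)
        have hj := join_spheres hBd hlink'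
        have hdim : ((s.card : ℤ) - 2) + (d - s.card) + 1 = d - 1 := by ring
        rw [hdim] at hj
        exact isSphere_of_iso (barycentric_sphere_iso hssimp) hj
      · obtain ⟨v, hv, hR⟩ := hpunct
        refine ⟨({v} : Finset V), mem_barycentric.mpr
          ⟨Finset.singleton_nonempty v, Finset.singleton_subset_iff.mpr hv, by simp⟩, ?_⟩
        exact barycentric_remove_contractible hR

end FSGraph
namespace FSGraph

variable {V : Type}

/-- The complex of proper subsets of `s` on which the sign predicate `pos` takes
both values; adjacency is strict inclusion. -/
def BSg (s : Finset V) (pos : V → Prop) : FSGraph (Finset V) where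
  verts := s.powerset.filter (fun t => (∃ a ∈ t, ¬ pos a) ∧ (∃ b ∈ t, pos b) ∧ t ≠ s)
  Adj t u := (t ⊂ u ∨ u ⊂ t) ∧
    (t ⊆ s ∧ (∃ a ∈ t, ¬ pos a) ∧ (∃ b ∈ t, pos b) ∧ t ≠ s) ∧
    (u ⊆ s ∧ (∃ a ∈ u, ¬ pos a) ∧ (∃ b ∈ u, pos b) ∧ u ≠ s)
  symm h := ⟨h.1.symm, h.2.2, h.2.1⟩
  loopless t h := by rcases h.1 with h' | h' <;> exact ssubset_irrefl t h'
  supp {t u} h := by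
    constructor <;> rw [Finset.mem_filter, Finset.mem_powerset] <;> tauto

lemma mem_BSg {s t : Finset V} {pos : V → Prop} :
    t ∈ (BSg s pos).verts ↔
      t ⊆ s ∧ (∃ a ∈ t, ¬ pos a) ∧ (∃ b ∈ t, pos b) ∧ t ≠ s := by
  simp only [BSg, Finset.mem_filter, Finset.mem_powerset, and_assoc]

lemma BSg_incl (s : Finset V) (pos : V → Prop) : InclGraph (BSg s pos) := by
  intro a ha b hb
  rw [mem_BSg] at ha hb
  exact ⟨fun h => h.1, fun h => ⟨h, ⟨ha.1, ha.2⟩, ⟨hb.1, hb.2⟩⟩⟩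

lemma two_le_card_of_bothsigns {t : Finset V} {pos : V → Prop}
    (h1 : ∃ a ∈ t, ¬ pos a) (h2 : ∃ b ∈ t, pos b) : 2 ≤ t.card := by
  obtain ⟨a, ha, hna⟩ := h1
  obtain ⟨b, hb, hpb⟩ := h2
  refine Finset.one_lt_card_iff_nontrivial.mpr ⟨a, ha, b, hb, ?_⟩
  rintro rfl
  exact hna hpb

/-- The unit sphere of `t` in `BSg s pos` is the join of `BSg t pos` with the
boundary complex of `s \ t`. -/
lemma BSg_sphere_iso {s t : Finset V} {pos : V → Prop} (ht : t ∈ (BSg s pos).verts) :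
    Iso (join (BSg t pos) (Bd (s \ t))) ((BSg s pos).sphere t)
      (Sum.elim id (fun w => t ∪ w)) := by
  obtain ⟨hts, htneg, htpos, htns⟩ := mem_BSg.mp ht
  have htss : t ⊂ s := ssubset_of_subset_ne hts htns
  have hmem1 : ∀ u, u ∈ (BSg t pos).verts → u ∈ ((BSg s pos).sphere t).verts := by
    intro u hu
    obtain ⟨hut, huneg, hupos, hunet⟩ := mem_BSg.mp hu
    have huss : u ⊂ t := ssubset_of_subset_ne hut hunet
    have humem : u ∈ (BSg s pos).verts :=
      mem_BSg.mpr ⟨hut.trans hts, huneg, hupos, ne_of_ssubset_subset huss hts⟩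
    exact mem_sphere_verts.mpr ⟨humem, ((BSg_incl s pos) t ht u humem).mpr (Or.inr huss)⟩
  have hmem2 : ∀ w, w ∈ (Bd (s \ t)).verts → t ∪ w ∈ ((BSg s pos).sphere t).verts := by
    intro w hw
    obtain ⟨hws, hwne, hwnet⟩ := mem_Bd.mp hw
    have hsub : t ∪ w ⊆ s := Finset.union_subset hts (hws.trans Finset.sdiff_subset)
    have hss : t ⊂ t ∪ w := by
      rw [Finset.ssubset_iff_subset_ne]
      refine ⟨Finset.subset_union_left, ?_⟩
      intro h
      obtain ⟨a, haw⟩ := hwne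
      have : a ∈ t := h ▸ Finset.mem_union_right t haw
      exact (Finset.mem_sdiff.mp (hws haw)).2 this
    have hne : t ∪ w ≠ s := by
      intro h
      apply hwnet
      refine subset_antisymm hws ?_
      intro a hasd
      obtain ⟨has, hant⟩ := Finset.mem_sdiff.mp hasd
      rcases Finset.mem_union.mp (h ▸ has : a ∈ t ∪ w) with h' | h'
      · exact absurd h' hant
      · exact h'
    have humem : t ∪ w ∈ (BSg s pos).verts := mem_BSg.mpr ⟨hsub,
      htneg.imp (fun a ha => ⟨Finset.mem_union_left w ha.1, ha.2⟩),
      htpos.imp (fun b hb => ⟨Finset.mem_union_left w hb.1, hb.2⟩), hne⟩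
    exact mem_sphere_verts.mpr ⟨humem, ((BSg_incl s pos) t ht _ humem).mpr (Or.inl hss)⟩
  refine { image := ?_, injOn := ?_, adj := ?_ }
  · ext u
    simp only [Finset.mem_image]
    constructor
    · rintro ⟨x, hx, rfl⟩
      rcases x with w | w
      · exact hmem1 w (mem_join_inl.mp hx)
      · exact hmem2 w (mem_join_inr.mp hx)
    · intro hu
      obtain ⟨humem, hadj⟩ := mem_sphere_verts.mp hu
      obtain ⟨hus, huneg, hupos, huns⟩ := mem_BSg.mp humem
      rcases ((BSg_incl s pos) t ht u humem).mp hadj with hss | hss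
      · refine ⟨Sum.inr (u \ t), mem_join_inr.mpr (mem_Bd.mpr ⟨?_, ?_, ?_⟩), ?_⟩
        · exact Finset.sdiff_subset_sdiff hus (le_refl t)
        · rw [Finset.sdiff_nonempty]
          exact fun h => (ssubset_irrefl t) (lt_of_lt_of_le hss h)
        · intro h
          apply huns
          have h1 : t ∪ (u \ t) = u := Finset.union_sdiff_of_subset hss.subset
          have h2 : t ∪ (s \ t) = s := Finset.union_sdiff_of_subset hts
          rw [← h1, h, h2]
        · exact Finset.union_sdiff_of_subset hss.subset
      · exact ⟨Sum.inl u, mem_join_inl.mpr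
          (mem_BSg.mpr ⟨hss.subset, huneg, hupos, hss.ne⟩), rfl⟩
  · rintro (a | a) ha (b | b) hb heq <;>
      simp only [Finset.mem_coe, mem_join_inl, mem_join_inr, Sum.elim_inl, Sum.elim_inr,
        id] at *
    · exact congrArg Sum.inl heq
    · exfalso
      obtain ⟨hat, -, -, hanet⟩ := mem_BSg.mp ha
      exact hanet (subset_antisymm hat (heq ▸ Finset.subset_union_left))
    · exfalso
      obtain ⟨hbt, -, -, hbnet⟩ := mem_BSg.mp hb
      exact hbnet (subset_antisymm hbt (heq.symm ▸ Finset.subset_union_left))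
    · obtain ⟨has, -, -⟩ := mem_Bd.mp ha
      obtain ⟨hbs, -, -⟩ := mem_Bd.mp hb
      have h1 := Finset.union_sdiff_cancel_left (disjoint_of_subset_sdiff has)
      have h2 := Finset.union_sdiff_cancel_left (disjoint_of_subset_sdiff hbs)
      rw [← h1, ← h2, heq]
  · rintro (a | a) ha (b | b) hb <;>
      simp only [Sum.elim_inl, Sum.elim_inr, id]
    · rw [mem_join_inl] at ha hb
      rw [join_adj_ll, (BSg_incl t pos) a ha b hb,
        ((BSg_incl s pos).sphere t) a (hmem1 a ha) b (hmem1 b hb)]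
    · rw [mem_join_inl] at ha; rw [mem_join_inr] at hb
      rw [show (join (BSg t pos) (Bd (s \ t))).Adj (Sum.inl a) (Sum.inr b) ↔
          (a ∈ (BSg t pos).verts ∧ b ∈ (Bd (s \ t)).verts) from Iff.rfl,
        ((BSg_incl s pos).sphere t) a (hmem1 a ha) _ (hmem2 b hb)]
      obtain ⟨hat, -, -, hanet⟩ := mem_BSg.mp ha
      constructor
      · intro _
        exact Or.inl (lt_of_lt_of_le (ssubset_of_subset_ne hat hanet) Finset.subset_union_left)
      · intro _
        exact ⟨ha, hb⟩
    · rw [mem_join_inr] at ha; rw [mem_join_inl] at hb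
      rw [show (join (BSg t pos) (Bd (s \ t))).Adj (Sum.inr a) (Sum.inl b) ↔
          (b ∈ (BSg t pos).verts ∧ a ∈ (Bd (s \ t)).verts) from Iff.rfl,
        ((BSg_incl s pos).sphere t) _ (hmem2 a ha) b (hmem1 b hb)]
      obtain ⟨hbt, -, -, hbnet⟩ := mem_BSg.mp hb
      constructor
      · intro _
        exact Or.inr (lt_of_lt_of_le (ssubset_of_subset_ne hbt hbnet) Finset.subset_union_left)
      · intro _
        exact ⟨hb, ha⟩
    · rw [mem_join_inr] at ha hb
      obtain ⟨has, -, -⟩ := mem_Bd.mp ha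
      obtain ⟨hbs, -, -⟩ := mem_Bd.mp hb
      rw [join_adj_rr, (Bd_incl (s \ t)) a ha b hb,
        ((BSg_incl s pos).sphere t) _ (hmem2 a ha) _ (hmem2 b hb),
        union_ssubset_union_iff (disjoint_of_subset_sdiff has) (disjoint_of_subset_sdiff hbs),
        union_ssubset_union_iff (disjoint_of_subset_sdiff hbs) (disjoint_of_subset_sdiff has)]

end FSGraph
namespace FSGraph

variable {V : Type}

lemma pair_subset_iff {n₀ p₀ : V} {u : Finset V} :
    ({n₀, p₀} : Finset V) ⊆ u ↔ n₀ ∈ u ∧ p₀ ∈ u := by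
  rw [Finset.insert_subset_iff, Finset.singleton_subset_iff]

lemma exists_third {s : Finset V} {n₀ p₀ : V} (h : 3 ≤ s.card) :
    ∃ c ∈ s, c ≠ n₀ ∧ c ≠ p₀ := by
  have hcard : 1 ≤ ((s.erase n₀).erase p₀).card := by
    have h1 := Finset.card_erase_le (s := s.erase n₀) (a := p₀)
    have h2 : s.card - 1 ≤ (s.erase n₀).card := Finset.pred_card_le_card_erase
    have h3 : (s.erase n₀).card - 1 ≤ ((s.erase n₀).erase p₀).card :=
      Finset.pred_card_le_card_erase
    omega
  have hne3 : 0 < ((s.erase n₀).erase p₀).card := by omega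
  obtain ⟨c, hc⟩ := Finset.card_pos.mp hne3
  obtain ⟨hcp, hc'⟩ := Finset.mem_erase.mp hc
  obtain ⟨hcn, hcs⟩ := Finset.mem_erase.mp hc'
  exact ⟨c, hcs, hcn, hcp⟩

/-- The punctured both-signs complex is contractible. -/
lemma BSg_puncture :
    ∀ (n : ℕ) (s : Finset V) (pos : V → Prop) (n₀ p₀ : V),
      s.card ≤ n → n₀ ∈ s → p₀ ∈ s → ¬ pos n₀ → pos p₀ → 3 ≤ s.card →
      Contractible ((BSg s pos).remove ({n₀, p₀} : Finset V)) := by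
  intro n
  induction n with
  | zero => intro s pos n₀ p₀ hn _ _ _ _ hc; omega
  | succ n ih =>
    intro s pos n₀ p₀ hn hn₀ hp₀ hnpos hppos hcard
    have hnp : n₀ ≠ p₀ := fun h => hnpos (h ▸ hppos)
    set x₀ : Finset V := {n₀, p₀} with hx₀def
    have hx₀s : x₀ ⊆ s := pair_subset_iff.mpr ⟨hn₀, hp₀⟩
    have hx₀card : x₀.card = 2 := by
      rw [hx₀def, Finset.card_insert_of_notMem (by simpa using hnp), Finset.card_singleton]
    set G0 := (BSg s pos).remove x₀ with hG0def
    have hG0incl : InclGraph G0 := (BSg_incl s pos).remove _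
    have hmemG0 : ∀ u, u ∈ G0.verts ↔
        (u ⊆ s ∧ (∃ a ∈ u, ¬ pos a) ∧ (∃ b ∈ u, pos b) ∧ u ≠ s) ∧ u ≠ x₀ := by
      intro u; rw [hG0def, mem_remove_verts, mem_BSg]
    set A₁ := G0.verts.filter (fun u => x₀ ⊆ u) with hA₁def
    refine peel G0 A₁ (fun B => ∀ t ∈ B, ∀ u ∈ A₁, u ⊆ t → u ∈ B)
      (fun u hu => (Finset.mem_filter.mp hu).1) (fun t ht u hu _ => hu) ?_ ?_
    · -- phase 1 step: peel off the supersets of x₀, largest first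
      intro B hBA hBne hInv
      obtain ⟨t, htB, htmax⟩ := B.exists_max_image Finset.card hBne
      have htA := hBA htB
      have htG0 := (Finset.mem_filter.mp htA).1
      have hx₀t : x₀ ⊆ t := (Finset.mem_filter.mp htA).2
      obtain ⟨⟨hts, htneg, htpos, htns⟩, htnx⟩ := (hmemG0 t).mp htG0
      have htc : 3 ≤ t.card := by
        have h1 := Finset.card_le_card hx₀t
        rcases lt_or_eq_of_le h1 with h | h
        · omega
        · exact absurd (Finset.eq_of_subset_of_card_le hx₀t (by omega)).symm htnx
      set P := fun y => y ∉ A₁ ∨ y ∈ B with hPdef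
      have hPt : P t := Or.inr htB
      refine ⟨t, htB, ?_, ?_⟩
      · refine contractible_of_iso
          (incl_iso ((BSg_incl t pos).remove _) ((hG0incl.induce P).sphere t) ?_)
          (ih t pos n₀ p₀ (by
              have := Finset.card_lt_card (ssubset_of_subset_ne hts htns); omega)
            (hx₀t (by simp [hx₀def])) (hx₀t (by simp [hx₀def])) hnpos hppos htc)
        ext u
        rw [mem_remove_verts, mem_BSg, mem_sphere_induce_verts]
        constructor
        · rintro ⟨⟨hut, huneg, hupos, hunet⟩, hunx⟩
          have huss : u ⊂ t := ssubset_of_subset_ne hut hunet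
          have huG0 : u ∈ G0.verts := (hmemG0 u).mpr
            ⟨⟨hut.trans hts, huneg, hupos, ne_of_ssubset_subset huss hts⟩, hunx⟩
          have hPu : P u := by
            by_cases hx₀u : x₀ ⊆ u
            · exact Or.inr (hInv t htB u (Finset.mem_filter.mpr ⟨huG0, hx₀u⟩) hut)
            · exact Or.inl (fun hmem => hx₀u (Finset.mem_filter.mp hmem).2)
          exact ⟨⟨huG0, hPu⟩, (hG0incl t htG0 u huG0).mpr (Or.inr huss), hPt, hPu⟩
        · rintro ⟨⟨huG0, hPu⟩, hadj, -, -⟩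
          obtain ⟨⟨hus, huneg, hupos, huns⟩, hunx⟩ := (hmemG0 u).mp huG0
          rcases (hG0incl t htG0 u huG0).mp hadj with h | h
          · exfalso
            have huA : u ∈ A₁ := Finset.mem_filter.mpr ⟨huG0, hx₀t.trans h.subset⟩
            have huB : u ∈ B := hPu.elim (fun hc => absurd huA hc) id
            have := htmax u huB
            have := Finset.card_lt_card h
            omega
          · exact ⟨⟨h.subset, huneg, hupos, h.ne⟩, hunx⟩
      · intro B' hB' t' htB' u huA hut
        have htB2 := ((hB' t').mp htB').1
        have huB := hInv t' htB2 u huA hut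
        refine (hB' u).mpr ⟨huB, ?_⟩
        rintro rfl
        have h1 := htmax t' htB2
        have h2 := Finset.eq_of_subset_of_card_le hut h1
        exact ((hB' t').mp htB').2 h2.symm
    · -- phase 1 base: now no set contains both n₀ and p₀
      set G2 := G0.induce (fun y => y ∉ A₁) with hG2def
      have hG2incl : InclGraph G2 := hG0incl.induce _
      have hmemG2 : ∀ u, u ∈ G2.verts ↔
          ((u ⊆ s ∧ (∃ a ∈ u, ¬ pos a) ∧ (∃ b ∈ u, pos b) ∧ u ≠ s) ∧ ¬ (n₀ ∈ u ∧ p₀ ∈ u)) := by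
        intro u
        rw [hG2def, mem_induce_verts, hmemG0]
        constructor
        · rintro ⟨⟨h1, h2⟩, h3⟩
          refine ⟨h1, ?_⟩
          rintro ⟨hh1, hh2⟩
          exact h3 (Finset.mem_filter.mpr ⟨(hmemG0 u).mpr ⟨h1, h2⟩, pair_subset_iff.mpr ⟨hh1, hh2⟩⟩)
        · rintro ⟨h1, h2⟩
          have hunx : u ≠ x₀ := by
            rintro rfl
            exact h2 ⟨by simp [hx₀def], by simp [hx₀def]⟩
          refine ⟨⟨h1, hunx⟩, ?_⟩
          intro hmem
          exact h2 (pair_subset_iff.mp (Finset.mem_filter.mp hmem).2)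
      by_cases hcaseA : ∀ b ∈ s, pos b → b = p₀
      · -- all positive vertices equal p₀: cone over s.erase n₀
        obtain ⟨c, hcs, hcn, hcp⟩ := exists_third (n₀ := n₀) (p₀ := p₀) hcard
        have hcneg : ¬ pos c := fun h => hcp (hcaseA c hcs h)
        have hwmem : s.erase n₀ ∈ G2.verts := by
          refine (hmemG2 _).mpr ⟨⟨Finset.erase_subset _ _,
            ⟨c, Finset.mem_erase.mpr ⟨hcn, hcs⟩, hcneg⟩,
            ⟨p₀, Finset.mem_erase.mpr ⟨fun h => hnp h.symm, hp₀⟩, hppos⟩, ?_⟩, ?_⟩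
          · intro h
            rw [← h] at hn₀
            exact Finset.notMem_erase n₀ s hn₀
          · rintro ⟨h1, -⟩
            exact Finset.notMem_erase n₀ s h1
        refine contractible_of_universal G2 (s.erase n₀) hwmem ?_
        intro u hu hune
        obtain ⟨⟨hus, huneg, hupos, huns⟩, hupair⟩ := (hmemG2 u).mp hu
        obtain ⟨b, hbu, hbpos⟩ := hupos
        have hbp : b = p₀ := hcaseA b (hus hbu) hbpos
        have hn₀u : n₀ ∉ u := fun h => hupair ⟨h, hbp ▸ hbu⟩
        have husub : u ⊆ s.erase n₀ := fun a ha =>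
          Finset.mem_erase.mpr ⟨fun h => hn₀u (h ▸ ha), hus ha⟩
        exact (hG2incl _ hwmem u hu).mpr (Or.inr (ssubset_of_subset_ne husub hune))
      · by_cases hcaseB : ∀ a ∈ s, ¬ pos a → a = n₀
        · -- all negative vertices equal n₀: cone over s.erase p₀
          obtain ⟨c, hcs, hcn, hcp⟩ := exists_third (n₀ := n₀) (p₀ := p₀) hcard
          have hcpos : pos c := by
            by_contra h
            exact hcn (hcaseB c hcs h)
          have hwmem : s.erase p₀ ∈ G2.verts := by
            refine (hmemG2 _).mpr ⟨⟨Finset.erase_subset _ _,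
              ⟨n₀, Finset.mem_erase.mpr ⟨hnp, hn₀⟩, hnpos⟩,
              ⟨c, Finset.mem_erase.mpr ⟨hcp, hcs⟩, hcpos⟩, ?_⟩, ?_⟩
            · intro h
              rw [← h] at hp₀
              exact Finset.notMem_erase p₀ s hp₀
            · rintro ⟨-, h2⟩
              exact Finset.notMem_erase p₀ s h2
          refine contractible_of_universal G2 (s.erase p₀) hwmem ?_
          intro u hu hune
          obtain ⟨⟨hus, huneg, hupos, huns⟩, hupair⟩ := (hmemG2 u).mp hu
          obtain ⟨a, hau, haneg⟩ := huneg
          have han : a = n₀ := hcaseB a (hus hau) haneg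
          have hp₀u : p₀ ∉ u := fun h => hupair ⟨han ▸ hau, h⟩
          have husub : u ⊆ s.erase p₀ := fun a' ha' =>
            Finset.mem_erase.mpr ⟨fun h => hp₀u (h ▸ ha'), hus ha'⟩
          exact (hG2incl _ hwmem u hu).mpr (Or.inr (ssubset_of_subset_ne husub hune))
        · -- both other signs exist: phase 2 peel
          push_neg at hcaseA hcaseB
          obtain ⟨p₁, hp₁s, hp₁pos, hp₁ne⟩ := hcaseA
          obtain ⟨n₁, hn₁s, hn₁negd, hn₁ne⟩ := hcaseB
          have hn₁neg : ¬ pos n₁ := hn₁negd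
          have hp₁n₀ : p₁ ≠ n₀ := fun h => hnpos (h ▸ hp₁pos)
          have hn₁p₀ : n₁ ≠ p₀ := fun h => hn₁neg (h ▸ hppos)
          set A₂ := G2.verts.filter (fun u => n₀ ∈ u) with hA₂def
          refine peel G2 A₂ (fun B => ∀ t ∈ B, ∀ u ∈ A₂, t ⊆ u → u ∈ B)
            (fun u hu => (Finset.mem_filter.mp hu).1) (fun t ht u hu _ => hu) ?_ ?_
          · -- phase 2 step: remove the sets containing n₀, smallest first
            intro B hBA hBne hInv
            obtain ⟨t, htB, htmin⟩ := B.exists_min_image Finset.card hBne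
            have htA := hBA htB
            have htG2 := (Finset.mem_filter.mp htA).1
            have hn₀t : n₀ ∈ t := (Finset.mem_filter.mp htA).2
            obtain ⟨⟨hts, htneg, htpos, htns⟩, htpair⟩ := (hmemG2 t).mp htG2
            have hp₀t : p₀ ∉ t := fun h => htpair ⟨hn₀t, h⟩
            have htsub : t ⊆ s.erase p₀ := fun a ha =>
              Finset.mem_erase.mpr ⟨fun h => hp₀t (h ▸ ha), hts ha⟩
            set P := fun y => y ∉ A₂ ∨ y ∈ B with hPdef
            have hPt : P t := Or.inr htB
            refine ⟨t, htB, ?_, ?_⟩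
            · by_cases htw : t = s.erase p₀
              · -- the last one: cone over (s.erase p₀).erase n₀
                set w := (s.erase p₀).erase n₀ with hwdef
                have hwG2 : w ∈ G2.verts := by
                  refine (hmemG2 w).mpr ⟨⟨?_, ⟨n₁, ?_, hn₁neg⟩, ⟨p₁, ?_, hp₁pos⟩, ?_⟩, ?_⟩
                  · exact (Finset.erase_subset _ _).trans (Finset.erase_subset _ _)
                  · exact Finset.mem_erase.mpr ⟨hn₁ne, Finset.mem_erase.mpr ⟨hn₁p₀, hn₁s⟩⟩
                  · exact Finset.mem_erase.mpr ⟨hp₁n₀, Finset.mem_erase.mpr ⟨hp₁ne, hp₁s⟩⟩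
                  · intro h
                    rw [← h] at hp₀
                    rw [hwdef] at hp₀
                    exact Finset.notMem_erase p₀ s (Finset.mem_erase.mp hp₀).2
                  · rintro ⟨h1, -⟩
                    exact Finset.notMem_erase n₀ _ h1
                have hPw : P w := Or.inl (fun hmem =>
                  Finset.notMem_erase n₀ _ (Finset.mem_filter.mp hmem).2)
                have hwss : w ⊂ t := htw ▸ Finset.erase_ssubset (by
                  exact Finset.mem_erase.mpr ⟨hnp, hn₀⟩)
                have hwmem : w ∈ ((G2.induce P).sphere t).verts :=
                  mem_sphere_induce_verts.mpr ⟨⟨hwG2, hPw⟩,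
                    (hG2incl t htG2 w hwG2).mpr (Or.inr hwss), hPt, hPw⟩
                refine contractible_of_universal _ w hwmem ?_
                intro u hu hune
                obtain ⟨⟨huG2, hPu⟩, hadj, -, -⟩ := mem_sphere_induce_verts.mp hu
                obtain ⟨⟨hus, -, -, huns⟩, hupair⟩ := (hmemG2 u).mp huG2
                rcases (hG2incl t htG2 u huG2).mp hadj with h | h
                · -- t ⊂ u impossible: u ⊋ s.erase p₀ within s means u = s
                  exfalso
                  rw [htw] at h
                  have hp₀u : p₀ ∈ u := by
                    by_contra hp₀u
                    have husub : u ⊆ s.erase p₀ := fun b hb =>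
                      Finset.mem_erase.mpr ⟨fun hbp => hp₀u (hbp ▸ hb), hus hb⟩
                    exact (ssubset_irrefl _) (lt_of_lt_of_le h husub)
                  have hsu : s ⊆ u := by
                    intro a has
                    by_cases hap : a = p₀
                    · exact hap ▸ hp₀u
                    · exact h.subset (Finset.mem_erase.mpr ⟨hap, has⟩)
                  exact huns (subset_antisymm hus hsu)
                · -- u ⊂ t : then n₀ ∉ u by minimality, so u ⊆ w
                  have hn₀u : n₀ ∉ u := by
                    intro hn₀u
                    have huA : u ∈ A₂ := Finset.mem_filter.mpr ⟨huG2, hn₀u⟩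
                    have huB : u ∈ B := hPu.elim (fun hc => absurd huA hc) id
                    have := htmin u huB
                    have := Finset.card_lt_card h
                    omega
                  have husub : u ⊆ w := by
                    intro a ha
                    rw [hwdef]
                    exact Finset.mem_erase.mpr ⟨fun he => hn₀u (he ▸ ha),
                      htw ▸ h.subset ha⟩
                  exact (((hG2incl.induce P).sphere t) w hwmem u hu).mpr
                    (Or.inr (ssubset_of_subset_ne husub hune))
              · -- not the last one: cone over s.erase p₀
                set w := s.erase p₀ with hwdef
                have hwG2 : w ∈ G2.verts := by
                  refine (hmemG2 w).mpr ⟨⟨Finset.erase_subset _ _,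
                    ⟨n₀, Finset.mem_erase.mpr ⟨hnp, hn₀⟩, hnpos⟩,
                    ⟨p₁, Finset.mem_erase.mpr ⟨hp₁ne, hp₁s⟩, hp₁pos⟩, ?_⟩, ?_⟩
                  · intro h
                    rw [← h] at hp₀
                    rw [hwdef] at hp₀
                    exact Finset.notMem_erase p₀ s hp₀
                  · rintro ⟨-, h2⟩
                    exact Finset.notMem_erase p₀ s h2
                have hwA : w ∈ A₂ := Finset.mem_filter.mpr ⟨hwG2,
                  Finset.mem_erase.mpr ⟨hnp, hn₀⟩⟩
                have hPw : P w := Or.inr (hInv t htB w hwA htsub)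
                have htw' : t ⊂ w := ssubset_of_subset_ne htsub htw
                have hwmem : w ∈ ((G2.induce P).sphere t).verts :=
                  mem_sphere_induce_verts.mpr ⟨⟨hwG2, hPw⟩,
                    (hG2incl t htG2 w hwG2).mpr (Or.inl htw'), hPt, hPw⟩
                refine contractible_of_universal _ w hwmem ?_
                intro u hu hune
                obtain ⟨⟨huG2, hPu⟩, hadj, -, -⟩ := mem_sphere_induce_verts.mp hu
                obtain ⟨⟨hus, -, -, huns⟩, hupair⟩ := (hmemG2 u).mp huG2
                rcases (hG2incl t htG2 u huG2).mp hadj with h | h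
                · -- t ⊂ u : u contains n₀, so p₀ ∉ u hence u ⊆ w
                  have hn₀u : n₀ ∈ u := h.subset hn₀t
                  have hp₀u : p₀ ∉ u := fun hc => hupair ⟨hn₀u, hc⟩
                  have husub : u ⊆ w := fun a ha =>
                    Finset.mem_erase.mpr ⟨fun he => hp₀u (he ▸ ha), hus ha⟩
                  exact (((hG2incl.induce P).sphere t) w hwmem u hu).mpr
                    (Or.inr (ssubset_of_subset_ne husub hune))
                · -- u ⊂ t ⊆ w
                  exact (((hG2incl.induce P).sphere t) w hwmem u hu).mpr
                    (Or.inr (lt_of_lt_of_le h htsub))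
            · intro B' hB' t' htB' u huA htu
              have htB2 := ((hB' t').mp htB').1
              have huB := hInv t' htB2 u huA htu
              refine (hB' u).mpr ⟨huB, ?_⟩
              rintro rfl
              have h1 := htmin t' htB2
              have h2 := Finset.eq_of_subset_of_card_le htu (by omega)
              exact ((hB' t').mp htB').2 h2
          · -- phase 2 base: cone over s.erase n₀
            set G3 := G2.induce (fun y => y ∉ A₂) with hG3def
            have hG3incl : InclGraph G3 := hG2incl.induce _
            have hwmem : s.erase n₀ ∈ G3.verts := by
              rw [hG3def, mem_induce_verts]
              have hwG2 : s.erase n₀ ∈ G2.verts := by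
                refine (hmemG2 _).mpr ⟨⟨Finset.erase_subset _ _,
                  ⟨n₁, Finset.mem_erase.mpr ⟨hn₁ne, hn₁s⟩, hn₁neg⟩,
                  ⟨p₀, Finset.mem_erase.mpr ⟨fun h => hnp h.symm, hp₀⟩, hppos⟩, ?_⟩, ?_⟩
                · intro h
                  rw [← h] at hn₀
                  exact Finset.notMem_erase n₀ s hn₀
                · rintro ⟨h1, -⟩
                  exact Finset.notMem_erase n₀ s h1
              exact ⟨hwG2, fun hmem => Finset.notMem_erase n₀ s (Finset.mem_filter.mp hmem).2⟩
            refine contractible_of_universal G3 (s.erase n₀) hwmem ?_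
            intro u hu hune
            obtain ⟨huG2, hPu⟩ := mem_induce_verts.mp hu
            obtain ⟨⟨hus, -, -, -⟩, -⟩ := (hmemG2 u).mp huG2
            have hn₀u : n₀ ∉ u := fun h => hPu (Finset.mem_filter.mpr ⟨huG2, h⟩)
            have husub : u ⊆ s.erase n₀ := fun a ha =>
              Finset.mem_erase.mpr ⟨fun h => hn₀u (h ▸ ha), hus ha⟩
            exact (hG3incl _ hwmem u hu).mpr (Or.inr (ssubset_of_subset_ne husub hune))

end FSGraph
namespace FSGraph

variable {V : Type}

/-- The both-signs complex of `s` is a `(|s| - 3)`-sphere. -/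
lemma BSg_isSphere :
    ∀ (n : ℕ) (s : Finset V) (pos : V → Prop), s.card ≤ n →
      (∃ a ∈ s, ¬ pos a) → (∃ b ∈ s, pos b) →
      IsSphere ((s.card : ℤ) - 3) (BSg s pos) := by
  intro n
  induction n with
  | zero =>
    intro s pos hn hneg hpos
    have := two_le_card_of_bothsigns hneg hpos
    omega
  | succ n ih =>
    intro s pos hn hneg hpos
    have hcard2 := two_le_card_of_bothsigns hneg hpos
    by_cases hc2 : s.card = 2
    · have hverts : (BSg s pos).verts = ∅ := by
        ext u
        simp only [mem_BSg, Finset.notMem_empty, iff_false, not_and]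
        intro hus huneg hupos
        have h2 := two_le_card_of_bothsigns huneg hupos
        have := Finset.card_le_card hus
        intro hune
        exact hune (Finset.eq_of_subset_of_card_le hus (by omega))
      rw [hc2]
      norm_num
      exact IsSphere.empty _ hverts
    · have hcard3 : 3 ≤ s.card := by omega
      obtain ⟨n₀, hn₀, hnneg⟩ := hneg
      obtain ⟨p₀, hp₀, hppos⟩ := hpos
      have hnp : n₀ ≠ p₀ := fun h => hnneg (h ▸ hppos)
      have hpairmem : ({n₀, p₀} : Finset V) ∈ (BSg s pos).verts := by
        refine mem_BSg.mpr ⟨pair_subset_iff.mpr ⟨hn₀, hp₀⟩,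
          ⟨n₀, by simp, hnneg⟩, ⟨p₀, by simp, hppos⟩, ?_⟩
        intro h
        have : ({n₀, p₀} : Finset V).card = 2 := by
          rw [Finset.card_insert_of_notMem (by simpa using hnp), Finset.card_singleton]
        rw [h] at this
        omega
      refine IsSphere.succ _ _ (by omega) ⟨_, hpairmem⟩ ?_ ?_
      · intro t ht
        obtain ⟨hts, htneg, htpos, htns⟩ := mem_BSg.mp ht
        have htss : t ⊂ s := ssubset_of_subset_ne hts htns
        have htcard := Finset.card_lt_card htss
        have htcard2 := two_le_card_of_bothsigns htneg htpos
        have hsdne : (s \ t).Nonempty := by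
          rw [Finset.sdiff_nonempty]
          exact fun h => htns (subset_antisymm hts h)
        have hsdcard : (s \ t).card = s.card - t.card := Finset.card_sdiff_of_subset hts
        have hS1 := ih t pos (by omega) htneg htpos
        have hS2 := Bd_isSphere (s \ t).card (s \ t) le_rfl hsdne
        have hj := join_spheres hS1 hS2
        have hdim : ((t.card : ℤ) - 3) + (((s \ t).card : ℤ) - 2) + 1 =
            ((s.card : ℤ) - 3) - 1 := by
          rw [hsdcard]
          have : t.card ≤ s.card := le_of_lt htcard
          push_cast [Nat.cast_sub this]
          ring
        rw [hdim] at hj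
        exact isSphere_of_iso (BSg_sphere_iso ht) hj
      · exact ⟨({n₀, p₀} : Finset V), hpairmem,
          BSg_puncture s.card s pos n₀ p₀ le_rfl hn₀ hp₀ hnneg hppos hcard3⟩

end FSGraph
namespace FSGraph

variable {V : Type}

lemma mem_levelSurface {G : FSGraph V} {f : V → ℝ} {c : ℝ} {s : Finset V} :
    s ∈ (G.levelSurface f c).verts ↔
      G.IsSimplex s ∧ (∃ a ∈ s, f a < c) ∧ (∃ b ∈ s, c < f b) := by
  rw [levelSurface, mem_induce_verts, mem_barycentric]

lemma levelSurface_incl (G : FSGraph V) (f : V → ℝ) (c : ℝ) :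
    InclGraph (G.levelSurface f c) := (barycentric_incl G).induce _

/-- The unit sphere of a simplex `s` in the level surface `{f = c}` is the join of
the both-signs complex of `s` with the refinement of the link of `s`. -/
lemma levelSurface_sphere_iso {G : FSGraph V} {f : V → ℝ} {c : ℝ} {s : Finset V}
    (hfc : ∀ v ∈ G.verts, f v ≠ c) (hs : s ∈ (G.levelSurface f c).verts) :
    Iso (join (BSg s (fun a => c < f a)) ((G.link s).barycentric))
      ((G.levelSurface f c).sphere s) (Sum.elim id (fun w => s ∪ w)) := by
  set pos := fun a => c < f a with hposdef
  set LS := G.levelSurface f c with hLSdef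
  have hLSincl := levelSurface_incl G f c
  obtain ⟨hssimp, hsneg, hspos⟩ := mem_levelSurface.mp hs
  have hsign : ∀ u, u ⊆ s → ((∃ a ∈ u, ¬ pos a) ↔ (∃ a ∈ u, f a < c)) := by
    intro u hus
    constructor
    · rintro ⟨a, hau, ha⟩
      exact ⟨a, hau, lt_of_le_of_ne (le_of_not_gt ha) (hfc a (hssimp.2.1 (hus hau)))⟩
    · rintro ⟨a, hau, ha⟩
      exact ⟨a, hau, not_lt_of_gt ha⟩
  have hmem1 : ∀ u, u ∈ (BSg s pos).verts → u ∈ (LS.sphere s).verts := by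
    intro u hu
    obtain ⟨hus, huneg, hupos, hune⟩ := mem_BSg.mp hu
    have huss : u ⊂ s := ssubset_of_subset_ne hus hune
    have humem : u ∈ LS.verts := mem_levelSurface.mpr
      ⟨hssimp.subset hus (huneg.imp fun a h => h.1), (hsign u hus).mp huneg, hupos⟩
    exact mem_sphere_verts.mpr ⟨humem, (hLSincl s hs u humem).mpr (Or.inr huss)⟩
  have hmem2 : ∀ w, (G.link s).IsSimplex w → s ∪ w ∈ (LS.sphere s).verts := by
    intro w hw
    have hdisj := link_simplex_disjoint hw
    have hss : s ⊂ s ∪ w := by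
      rw [Finset.ssubset_iff_subset_ne]
      refine ⟨Finset.subset_union_left, ?_⟩
      intro h
      obtain ⟨a, haw⟩ := hw.1
      exact Finset.disjoint_right.mp hdisj haw (h ▸ Finset.mem_union_right s haw)
    have humem : s ∪ w ∈ LS.verts := mem_levelSurface.mpr ⟨union_link_simplex hssimp hw,
      hsneg.imp (fun a ha => ⟨Finset.mem_union_left w ha.1, ha.2⟩),
      hspos.imp (fun b hb => ⟨Finset.mem_union_left w hb.1, hb.2⟩)⟩
    exact mem_sphere_verts.mpr ⟨humem, (hLSincl s hs _ humem).mpr (Or.inl hss)⟩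
  refine { image := ?_, injOn := ?_, adj := ?_ }
  · ext u
    simp only [Finset.mem_image]
    constructor
    · rintro ⟨x, hx, rfl⟩
      rcases x with w | w
      · exact hmem1 w (mem_join_inl.mp hx)
      · exact hmem2 w (mem_barycentric.mp (mem_join_inr.mp hx))
    · intro hu
      obtain ⟨humem, hadj⟩ := mem_sphere_verts.mp hu
      obtain ⟨husimp, huneg, hupos⟩ := mem_levelSurface.mp humem
      rcases (hLSincl s hs u humem).mp hadj with h | h
      · refine ⟨Sum.inr (u \ s), mem_join_inr.mpr (mem_barycentric.mpr ?_), ?_⟩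
        · refine isSimplex_link.mpr ⟨?_, ?_⟩
          · refine husimp.subset Finset.sdiff_subset ?_
            rw [Finset.sdiff_nonempty]
            exact fun hcs => ssubset_irrefl s (lt_of_lt_of_le h hcs)
          · intro y hy v hv
            obtain ⟨hyu, hys⟩ := Finset.mem_sdiff.mp hy
            exact husimp.2.2 v (h.subset hv) y hyu (fun he => hys (he ▸ hv))
        · exact Finset.union_sdiff_of_subset h.subset
      · refine ⟨Sum.inl u, mem_join_inl.mpr (mem_BSg.mpr
          ⟨h.subset, (hsign u h.subset).mpr huneg, hupos, h.ne⟩), rfl⟩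
  · rintro (a | a) ha (b | b) hb heq <;>
      simp only [Finset.mem_coe, mem_join_inl, mem_join_inr, Sum.elim_inl, Sum.elim_inr,
        id] at *
    · exact congrArg Sum.inl heq
    · exfalso
      obtain ⟨hat, -, -, hanet⟩ := mem_BSg.mp ha
      exact hanet (subset_antisymm hat (heq ▸ Finset.subset_union_left))
    · exfalso
      obtain ⟨hbt, -, -, hbnet⟩ := mem_BSg.mp hb
      exact hbnet (subset_antisymm hbt (heq.symm ▸ Finset.subset_union_left))
    · have hda := link_simplex_disjoint (mem_barycentric.mp ha)
      have hdb := link_simplex_disjoint (mem_barycentric.mp hb)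
      have h1 := Finset.union_sdiff_cancel_left hda
      have h2 := Finset.union_sdiff_cancel_left hdb
      rw [← h1, ← h2, heq]
  · rintro (a | a) ha (b | b) hb <;>
      simp only [Sum.elim_inl, Sum.elim_inr, id]
    · rw [mem_join_inl] at ha hb
      rw [join_adj_ll, (BSg_incl s pos) a ha b hb,
        (hLSincl.sphere s) a (hmem1 a ha) b (hmem1 b hb)]
    · rw [mem_join_inl] at ha; rw [mem_join_inr] at hb
      rw [show (join (BSg s pos) ((G.link s).barycentric)).Adj (Sum.inl a) (Sum.inr b) ↔
          (a ∈ (BSg s pos).verts ∧ b ∈ (G.link s).barycentric.verts) from Iff.rfl,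
        (hLSincl.sphere s) a (hmem1 a ha) _ (hmem2 b (mem_barycentric.mp hb))]
      obtain ⟨has, -, -, hanes⟩ := mem_BSg.mp ha
      constructor
      · intro _
        exact Or.inl (lt_of_lt_of_le (ssubset_of_subset_ne has hanes) Finset.subset_union_left)
      · intro _
        exact ⟨ha, hb⟩
    · rw [mem_join_inr] at ha; rw [mem_join_inl] at hb
      rw [show (join (BSg s pos) ((G.link s).barycentric)).Adj (Sum.inr a) (Sum.inl b) ↔
          (b ∈ (BSg s pos).verts ∧ a ∈ (G.link s).barycentric.verts) from Iff.rfl,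
        (hLSincl.sphere s) _ (hmem2 a (mem_barycentric.mp ha)) b (hmem1 b hb)]
      obtain ⟨hbs, -, -, hbnes⟩ := mem_BSg.mp hb
      constructor
      · intro _
        exact Or.inr (lt_of_lt_of_le (ssubset_of_subset_ne hbs hbnes) Finset.subset_union_left)
      · intro _
        exact ⟨hb, ha⟩
    · rw [mem_join_inr] at ha hb
      have hda := link_simplex_disjoint (mem_barycentric.mp ha)
      have hdb := link_simplex_disjoint (mem_barycentric.mp hb)
      rw [join_adj_rr, (barycentric_incl (G.link s)) a ha b hb,
        (hLSincl.sphere s) _ (hmem2 a (mem_barycentric.mp ha)) _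
          (hmem2 b (mem_barycentric.mp hb)),
        union_ssubset_union_iff hda hdb, union_ssubset_union_iff hdb hda]

end FSGraph

/-- **Discrete Sard property.** For a `d`-graph `G`, a locally injective `f` and a
real `c` not in the range of `f`, the level surface `{f = c}` in the Barycentric
refinement `G'` is either the empty graph or a `(d-1)`-graph. -/
theorem discrete_sard {V : Type} (d : ℤ) (G : FSGraph V) (f : V → ℝ) (c : ℝ)
    (hG : FSGraph.IsDGraph d G) (hf : G.LocallyInjective f)
    (hc : ∀ v ∈ G.verts, f v ≠ c) :
    (G.levelSurface f c).verts = ∅ ∨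
      FSGraph.IsDGraph (d - 1) (G.levelSurface f c) := by
  by_cases hempty : (G.levelSurface f c).verts = ∅
  · exact Or.inl hempty
  · refine Or.inr ⟨Finset.nonempty_of_ne_empty hempty, ?_⟩
    intro s hsV
    obtain ⟨hssimp, hsneg, hspos⟩ := FSGraph.mem_levelSurface.mp hsV
    set pos := fun a => c < f a with hposdef
    have hBS : FSGraph.IsSphere ((s.card : ℤ) - 3) (FSGraph.BSg s pos) := by
      refine FSGraph.BSg_isSphere s.card s pos le_rfl ?_ hspos
      obtain ⟨a, ha, hfa⟩ := hsneg
      exact ⟨a, ha, not_lt_of_gt hfa⟩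
    have hlink : FSGraph.IsSphere (d - s.card) (G.link s) :=
      FSGraph.link_isSphere_dgraph hG hssimp
    have hlink' : FSGraph.IsSphere (d - s.card) (G.link s).barycentric :=
      FSGraph.barycentric_isSphere (d - s.card + 1).toNat _ _ hlink le_rfl
    have hj := FSGraph.join_spheres hBS hlink'
    have hdim : ((s.card : ℤ) - 3) + (d - s.card) + 1 = d - 1 - 1 := by ring
    rw [hdim] at hj
    exact FSGraph.isSphere_of_iso (FSGraph.levelSurface_sphere_iso hc hsV) hj
end
end

section
/- Index identity: For every finite simple graph G, every locally injective function f on its vertices, and every vertex x, one has χ(S_f^−(x)) + χ(S_f^+(x)) = χ(S(x)) + χ(B_f(x)), where χ denotes the Euler characteristic; equivalently, the symmetric index j_f(x) = 1 − (χ(S_f^+(x)) + χ(S_f^−(x)))/2 equals 1 − χ(S(x))/2 − χ(B_f(x))/2. -/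
attribute [local instance] Classical.propDecidable

noncomputable section

namespace IndexIdentityAux
open FSGraph Finset

variable {V : Type}

lemma mem_simplices {G : FSGraph V} {s : Finset V} :
    s ∈ G.simplices ↔ G.IsSimplex s := by
  simp only [FSGraph.simplices, Finset.mem_filter, Finset.mem_powerset]
  exact ⟨fun h => h.2, fun h => ⟨h.2.1, h⟩⟩

lemma isSimplex_induce {G : FSGraph V} {P : V → Prop} {s : Finset V} :
    (G.induce P).IsSimplex s ↔ G.IsSimplex s ∧ ∀ a ∈ s, P a := by
  constructor
  · rintro ⟨hne, hsub, hadj⟩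
    have hP : ∀ a ∈ s, P a := fun a ha => (Finset.mem_filter.mp (hsub ha)).2
    exact ⟨⟨hne, fun a ha => (Finset.mem_filter.mp (hsub ha)).1,
      fun a ha b hb hab => (hadj a ha b hb hab).1⟩, hP⟩
  · rintro ⟨⟨hne, hsub, hadj⟩, hP⟩
    exact ⟨hne, fun a ha => Finset.mem_filter.mpr ⟨hsub ha, hP a ha⟩,
      fun a ha b hb hab => ⟨hadj a ha b hb hab, hP a ha, hP b hb⟩⟩

lemma simplices_induce (G : FSGraph V) (P : V → Prop) :
    (G.induce P).simplices = G.simplices.filter (fun s => ∀ a ∈ s, P a) := by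
  ext s
  simp only [mem_simplices, Finset.mem_filter, isSimplex_induce]

lemma isSimplex_subset {G : FSGraph V} {s t : Finset V} (ht : G.IsSimplex t)
    (hs : s ⊆ t) (hne : s.Nonempty) : G.IsSimplex s :=
  ⟨hne, fun a ha => ht.2.1 (hs ha), fun a ha b hb hab => ht.2.2 a (hs ha) b (hs hb) hab⟩

/-- A chain: a finset of finsets that is pairwise comparable by strict inclusion. -/
def IsChain (C : Finset (Finset V)) : Prop :=
  ∀ s ∈ C, ∀ t ∈ C, s ≠ t → (s ⊂ t ∨ t ⊂ s)

noncomputable def chains (M : Finset (Finset V)) : Finset (Finset (Finset V)) :=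
  M.powerset.filter (fun C => C.Nonempty ∧ IsChain C)

lemma mem_chains {M : Finset (Finset V)} {C : Finset (Finset V)} :
    C ∈ chains M ↔ C ⊆ M ∧ C.Nonempty ∧ IsChain C := by
  simp [chains, Finset.mem_filter, Finset.mem_powerset]

noncomputable def csum (M : Finset (Finset V)) : ℤ :=
  ∑ C ∈ chains M, (-1 : ℤ) ^ (C.card - 1)

lemma neg_pow_card {α : Type*} {s : Finset α} (h : s.Nonempty) :
    (-1 : ℤ) ^ s.card = -(-1 : ℤ) ^ (s.card - 1) := by
  obtain ⟨k, hk⟩ : ∃ k, s.card = k + 1 :=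
    ⟨s.card - 1, (Nat.succ_pred_eq_of_pos (Finset.card_pos.mpr h)).symm⟩
  simp [hk, pow_succ]

lemma csum_eq_aux : ∀ (n : ℕ) (M : Finset (Finset V)), M.card ≤ n →
    (∀ t ∈ M, ∑ s ∈ M.filter (· ⊆ t), (-1 : ℤ) ^ s.card = 1) →
    csum M = ∑ t ∈ M, (-1 : ℤ) ^ t.card := by
  intro n
  induction n with
  | zero =>
    intro M hcard _
    have : M = ∅ := Finset.card_eq_zero.mp (Nat.le_zero.mp hcard)
    subst this
    simp [csum, chains, Finset.filter_singleton]
  | succ n ih =>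
    intro M hcard hM
    rcases M.eq_empty_or_nonempty with rfl | hne
    · simp [csum, chains, Finset.filter_singleton]
    obtain ⟨m, hm, hmax⟩ := M.exists_max_image Finset.card hne
    set M' := M.erase m with hM'def
    set Msub := M.filter (· ⊂ m) with hMsubdef
    have hmnotsub : m ∉ Msub := by
      simp only [hMsubdef, Finset.mem_filter, not_and]
      exact fun _ => ssubset_irrefl m
    have hMsubM' : Msub ⊆ M' := by
      intro s hs
      rw [Finset.mem_filter] at hs
      exact Finset.mem_erase.mpr ⟨hs.2.ne, hs.1⟩
    have hcardM' : M'.card ≤ n := by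
      have h1 := Finset.card_erase_of_mem hm
      have h2 : 1 ≤ M.card := Finset.card_pos.mpr hne
      rw [hM'def, h1]
      omega
    -- the "no element of M strictly contains m" fact
    have hmaxm : ∀ s ∈ M, ¬ m ⊂ s := by
      intro s hs hss
      exact absurd (hmax s hs) (not_le.mpr (Finset.card_lt_card hss))
    -- hypothesis transfers to M'
    have hfilter' : ∀ t ∈ M', M'.filter (· ⊆ t) = M.filter (· ⊆ t) := by
      intro t ht
      ext s
      simp only [Finset.mem_filter, hM'def, Finset.mem_erase]
      constructor
      · rintro ⟨⟨_, hsM⟩, hst⟩; exact ⟨hsM, hst⟩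
      · rintro ⟨hsM, hst⟩
        refine ⟨⟨?_, hsM⟩, hst⟩
        rintro rfl
        rw [Finset.mem_erase] at ht
        exact ht.1 (Finset.eq_of_subset_of_card_le hst (hmax t ht.2)).symm
    have hMhyp' : ∀ t ∈ M', ∑ s ∈ M'.filter (· ⊆ t), (-1 : ℤ) ^ s.card = 1 := by
      intro t ht
      rw [hfilter' t ht]
      exact hM t (Finset.mem_erase.mp ht).2
    -- hypothesis transfers to Msub
    have hfiltersub : ∀ t ∈ Msub, Msub.filter (· ⊆ t) = M.filter (· ⊆ t) := by
      intro t ht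
      rw [Finset.mem_filter] at ht
      ext s
      simp only [Finset.mem_filter, hMsubdef]
      constructor
      · rintro ⟨⟨hsM, _⟩, hst⟩; exact ⟨hsM, hst⟩
      · rintro ⟨hsM, hst⟩
        exact ⟨⟨hsM, lt_of_le_of_lt hst ht.2⟩, hst⟩
    have hMhypsub : ∀ t ∈ Msub, ∑ s ∈ Msub.filter (· ⊆ t), (-1 : ℤ) ^ s.card = 1 := by
      intro t ht
      rw [hfiltersub t ht]
      exact hM t (Finset.mem_filter.mp ht).1
    have ihM' := ih M' hcardM' hMhyp'
    have ihMsub := ih Msub (le_trans (Finset.card_le_card hMsubM') hcardM') hMhypsub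
    -- split chains M by membership of m
    have hsplit : csum M =
        (∑ C ∈ (chains M).filter (fun C => m ∈ C), (-1 : ℤ) ^ (C.card - 1)) +
        (∑ C ∈ (chains M).filter (fun C => m ∉ C), (-1 : ℤ) ^ (C.card - 1)) := by
      exact (Finset.sum_filter_add_sum_filter_not _ _ _).symm
    -- chains avoiding m
    have hnot : (chains M).filter (fun C => m ∉ C) = chains M' := by
      ext C
      simp only [Finset.mem_filter, mem_chains]
      constructor
      · rintro ⟨⟨hCM, hCne, hCch⟩, hmC⟩
        exact ⟨fun s hs => Finset.mem_erase.mpr ⟨fun h => hmC (h ▸ hs), hCM hs⟩, hCne, hCch⟩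
      · rintro ⟨hCM, hCne, hCch⟩
        refine ⟨⟨fun s hs => (Finset.mem_erase.mp (hCM hs)).2, hCne, hCch⟩, fun h => ?_⟩
        exact (Finset.mem_erase.mp (hCM h)).1 rfl
    -- chains containing m: bijection with insert ∅ (chains Msub)
    have hemptynot : (∅ : Finset (Finset V)) ∉ chains Msub := by
      simp [mem_chains]
    have hmem : ∑ C ∈ (chains M).filter (fun C => m ∈ C), (-1 : ℤ) ^ (C.card - 1)
        = ∑ C' ∈ insert ∅ (chains Msub), (-1 : ℤ) ^ C'.card := by
      refine Finset.sum_bij' (fun C _ => C.erase m) (fun C' _ => insert m C') ?_ ?_ ?_ ?_ ?_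
      · -- maps into target
        intro C hC
        show C.erase m ∈ insert ∅ (chains Msub)
        rw [Finset.mem_filter, mem_chains] at hC
        obtain ⟨⟨hCM, _, hCch⟩, hmC⟩ := hC
        rcases (C.erase m).eq_empty_or_nonempty with he | hne'
        · rw [he]; exact Finset.mem_insert_self _ _
        · refine Finset.mem_insert_of_mem (mem_chains.mpr ⟨?_, hne', ?_⟩)
          · intro s hs
            rw [Finset.mem_erase] at hs
            have hsM := hCM hs.2
            rcases hCch s hs.2 m hmC hs.1 with h | h
            · exact Finset.mem_filter.mpr ⟨hsM, h⟩
            · exact absurd h (hmaxm s hsM)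
          · intro s hs t ht hst
            exact hCch s (Finset.mem_of_mem_erase hs) t (Finset.mem_of_mem_erase ht) hst
      · -- maps back
        intro C' hC'
        show insert m C' ∈ (chains M).filter (fun C => m ∈ C)
        rw [Finset.mem_filter, mem_chains]
        rcases Finset.mem_insert.mp hC' with rfl | hC'
        · refine ⟨⟨?_, ?_, ?_⟩, Finset.mem_insert_self _ _⟩
          · intro s hs
            rw [Finset.mem_insert] at hs
            rcases hs with rfl | hs
            · exact hm
            · simp at hs
          · exact ⟨m, Finset.mem_insert_self _ _⟩
          · intro s hs t ht hst
            have hs' : s = m := by simpa using hs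
            have ht' : t = m := by simpa using ht
            exact absurd (hs'.trans ht'.symm) hst
        · rw [mem_chains] at hC'
          obtain ⟨hCM, _, hCch⟩ := hC'
          refine ⟨⟨?_, ⟨m, Finset.mem_insert_self _ _⟩, ?_⟩, Finset.mem_insert_self _ _⟩
          · intro s hs
            rcases Finset.mem_insert.mp hs with rfl | hs
            · exact hm
            · exact (Finset.mem_filter.mp (hCM hs)).1
          · intro s hs t ht hst
            rcases Finset.mem_insert.mp hs with hs' | hs'
            · rcases Finset.mem_insert.mp ht with ht' | ht'
              · exact absurd (hs'.trans ht'.symm) hst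
              · right
                rw [hs']
                exact (Finset.mem_filter.mp (hCM ht')).2
            · rcases Finset.mem_insert.mp ht with ht' | ht'
              · left
                rw [ht']
                exact (Finset.mem_filter.mp (hCM hs')).2
              · exact hCch s hs' t ht' hst
      · -- left inverse
        intro C hC
        show insert m (C.erase m) = C
        rw [Finset.mem_filter] at hC
        exact Finset.insert_erase hC.2
      · -- right inverse
        intro C' hC'
        show (insert m C').erase m = C'
        have hmC' : m ∉ C' := by
          rcases Finset.mem_insert.mp hC' with rfl | hC'
          · simp
          · rw [mem_chains] at hC'
            intro h
            exact (ssubset_irrefl m) (Finset.mem_filter.mp (hC'.1 h)).2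
        exact Finset.erase_insert hmC'
      · -- values agree
        intro C hC
        show (-1 : ℤ) ^ (C.card - 1) = (-1 : ℤ) ^ (C.erase m).card
        rw [Finset.mem_filter] at hC
        rw [Finset.card_erase_of_mem hC.2]
    have hinsert : ∑ C' ∈ insert ∅ (chains Msub), (-1 : ℤ) ^ C'.card
        = 1 - csum Msub := by
      rw [Finset.sum_insert hemptynot]
      have : ∑ C' ∈ chains Msub, (-1 : ℤ) ^ C'.card
          = ∑ C' ∈ chains Msub, -(-1 : ℤ) ^ (C'.card - 1) := by
        refine Finset.sum_congr rfl fun C' hC' => ?_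
        exact neg_pow_card (mem_chains.mp hC').2.1
      rw [this, Finset.sum_neg_distrib]
      show 1 + -csum Msub = 1 - csum Msub
      ring
    -- the key count at m
    have hMm : M.filter (· ⊆ m) = insert m Msub := by
      ext s
      simp only [Finset.mem_filter, Finset.mem_insert, hMsubdef]
      constructor
      · rintro ⟨hsM, hsm⟩
        rcases eq_or_ne s m with rfl | hne'
        · exact Or.inl rfl
        · exact Or.inr ⟨hsM, Finset.ssubset_iff_subset_ne.mpr ⟨hsm, hne'⟩⟩
      · rintro (rfl | ⟨hsM, hsm⟩)
        · exact ⟨hm, subset_rfl⟩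
        · exact ⟨hsM, hsm.subset⟩
    have hcount : ∑ s ∈ Msub, (-1 : ℤ) ^ s.card = 1 - (-1 : ℤ) ^ m.card := by
      have h1 := hM m hm
      rw [hMm, Finset.sum_insert hmnotsub] at h1
      linarith
    -- put it together
    have hcs : ∑ C ∈ chains M', (-1 : ℤ) ^ (C.card - 1) = csum M' := rfl
    rw [hsplit, hnot, hmem, hinsert, hcs, ihM', ihMsub]
    have hsumM : ∑ t ∈ M, (-1 : ℤ) ^ t.card
        = (-1 : ℤ) ^ m.card + ∑ t ∈ M', (-1 : ℤ) ^ t.card := by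
      rw [hM'def]
      exact (Finset.add_sum_erase M _ hm).symm
    rw [hsumM]
    linarith [hcount]

lemma csum_eq (M : Finset (Finset V))
    (hM : ∀ t ∈ M, ∑ s ∈ M.filter (· ⊆ t), (-1 : ℤ) ^ s.card = 1) :
    csum M = ∑ t ∈ M, (-1 : ℤ) ^ t.card :=
  csum_eq_aux M.card M le_rfl hM

lemma sum_ne_powerset {A : Finset V} (hA : A.Nonempty) :
    ∑ s ∈ A.powerset.filter (fun s => s.Nonempty), (-1 : ℤ) ^ s.card = -1 := by
  have h0 : ∑ s ∈ A.powerset, (-1 : ℤ) ^ s.card = 0 := by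
    rw [Finset.sum_powerset_neg_one_pow_card]
    simp [Finset.nonempty_iff_ne_empty.mp hA]
  have hsplit := Finset.sum_filter_add_sum_filter_not A.powerset
    (fun s => s.Nonempty) (fun s => (-1 : ℤ) ^ s.card)
  have hne : A.powerset.filter (fun s => ¬ s.Nonempty) = {∅} := by
    ext s
    simp only [Finset.mem_filter, Finset.mem_powerset,
      Finset.not_nonempty_iff_eq_empty, Finset.mem_singleton]
    constructor
    · rintro ⟨_, rfl⟩; rfl
    · rintro rfl; exact ⟨Finset.empty_subset A, rfl⟩
  rw [hne] at hsplit
  simp only [Finset.sum_singleton, Finset.card_empty, pow_zero] at hsplit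
  omega

end IndexIdentityAux

namespace IndexIdentityAux

variable {V : Type}

lemma tri_split (f : V → ℝ) (x : V) (T : Finset (Finset V))
    (hT : ∀ s ∈ T, s.Nonempty ∧ ∀ a ∈ s, f a ≠ f x) (g : Finset V → ℤ) :
    ∑ s ∈ T, g s
      = (∑ s ∈ T.filter (fun s => ∀ a ∈ s, f a < f x), g s)
      + (∑ s ∈ T.filter (fun s => ∀ a ∈ s, f x < f a), g s)
      + (∑ s ∈ T.filter (fun s => (∃ a ∈ s, f a < f x) ∧ ∃ b ∈ s, f x < f b), g s) := by
  have h1 := (Finset.sum_filter_add_sum_filter_not T (fun s => ∀ a ∈ s, f a < f x) g).symm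
  have h2 := (Finset.sum_filter_add_sum_filter_not
      (T.filter (fun s => ¬ ∀ a ∈ s, f a < f x)) (fun s => ∀ a ∈ s, f x < f a) g).symm
  rw [Finset.filter_filter, Finset.filter_filter] at h2
  have e1 : T.filter (fun s => (¬ ∀ a ∈ s, f a < f x) ∧ ∀ a ∈ s, f x < f a)
      = T.filter (fun s => ∀ a ∈ s, f x < f a) := by
    ext s
    simp only [Finset.mem_filter]
    constructor
    · rintro ⟨hs, _, h⟩; exact ⟨hs, h⟩
    · rintro ⟨hs, h⟩
      refine ⟨hs, fun hlo => ?_, h⟩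
      obtain ⟨a, ha⟩ := (hT s hs).1
      exact absurd (hlo a ha) (not_lt.mpr (le_of_lt (h a ha)))
  have e2 : T.filter (fun s => (¬ ∀ a ∈ s, f a < f x) ∧ ¬ ∀ a ∈ s, f x < f a)
      = T.filter (fun s => (∃ a ∈ s, f a < f x) ∧ ∃ b ∈ s, f x < f b) := by
    ext s
    simp only [Finset.mem_filter]
    constructor
    · rintro ⟨hs, h1', h2'⟩
      refine ⟨hs, ?_, ?_⟩
      · by_contra hno
        push_neg at hno
        apply h2'
        intro a ha
        rcases ((hT s hs).2 a ha).lt_or_gt with h | h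
        · exact absurd h (not_lt.mpr (hno a ha))
        · exact h
      · by_contra hno
        push_neg at hno
        apply h1'
        intro a ha
        rcases ((hT s hs).2 a ha).lt_or_gt with h | h
        · exact h
        · exact absurd h (not_lt.mpr (hno a ha))
    · rintro ⟨hs, ⟨a, ha, hfa⟩, ⟨b, hb, hfb⟩⟩
      refine ⟨hs, fun h => ?_, fun h => ?_⟩
      · exact absurd (h b hb) (not_lt.mpr hfb.le)
      · exact absurd (h a ha) (not_lt.mpr hfa.le)
  rw [e1, e2] at h2
  linarith [h1, h2]

end IndexIdentityAux

/-- **Index identity.** For every finite simple graph `G`, locally injective `f` and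
vertex `x`: `χ(S_f^-(x)) + χ(S_f^+(x)) = χ(S(x)) + χ(B_f(x))`; equivalently the
symmetric index `j_f(x) = 1 - (χ(S_f^+(x)) + χ(S_f^-(x)))/2` equals
`1 - χ(S(x))/2 - χ(B_f(x))/2`. -/
theorem index_identity {V : Type} (G : FSGraph V) (f : V → ℝ)
    (hf : G.LocallyInjective f) (x : V) (hx : x ∈ G.verts) :
    (G.subSphere f x).euler + (G.supSphere f x).euler
        = (G.sphere x).euler + (G.centerManifold f x).euler ∧
      (1 : ℚ) - (((G.supSphere f x).euler : ℚ) + ((G.subSphere f x).euler : ℚ)) / 2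
        = 1 - ((G.sphere x).euler : ℚ) / 2 - ((G.centerManifold f x).euler : ℚ) / 2 := by
  have key : (G.subSphere f x).euler + (G.supSphere f x).euler
      = (G.sphere x).euler + (G.centerManifold f x).euler := by
    set S := G.sphere x with hSdef
    have hfx : ∀ y ∈ S.verts, f y ≠ f x := by
      intro y hy
      have hadj : G.Adj x y := by
        rw [hSdef] at hy
        exact (Finset.mem_filter.mp hy).2
      exact (hf x y hadj).symm
    have hsimpne : ∀ s ∈ S.simplices, s.Nonempty ∧ ∀ a ∈ s, f a ≠ f x := by
      intro s hs
      have hs' := IndexIdentityAux.mem_simplices.mp hs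
      exact ⟨hs'.1, fun a ha => hfx a (hs'.2.1 ha)⟩
    set Mset := S.simplices.filter
      (fun s => (∃ a ∈ s, f a < f x) ∧ ∃ b ∈ s, f x < f b) with hMdef
    -- Step 1: trichotomy split of χ(S)
    have hsub : (G.subSphere f x).euler
        = ∑ s ∈ S.simplices.filter (fun s => ∀ a ∈ s, f a < f x),
            (-1 : ℤ) ^ (s.card - 1) := by
      show ∑ s ∈ (S.induce (fun y => f y < f x)).simplices, (-1 : ℤ) ^ (s.card - 1) = _
      rw [IndexIdentityAux.simplices_induce]
    have hsup : (G.supSphere f x).euler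
        = ∑ s ∈ S.simplices.filter (fun s => ∀ a ∈ s, f x < f a),
            (-1 : ℤ) ^ (s.card - 1) := by
      show ∑ s ∈ (S.induce (fun y => f x < f y)).simplices, (-1 : ℤ) ^ (s.card - 1) = _
      rw [IndexIdentityAux.simplices_induce]
    have hsphere := IndexIdentityAux.tri_split f x S.simplices hsimpne
      (fun s => (-1 : ℤ) ^ (s.card - 1))
    have step1 : S.euler = (G.subSphere f x).euler + (G.supSphere f x).euler
        + ∑ s ∈ Mset, (-1 : ℤ) ^ (s.card - 1) := by
      rw [hsub, hsup]
      exact hsphere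
    -- Step 2: χ(B) as a chain sum
    have hB : (G.centerManifold f x).euler = IndexIdentityAux.csum Mset := by
      show ∑ C ∈ (S.barycentric.induce
          (fun s => (∃ a ∈ s, f a < f x) ∧ ∃ b ∈ s, f x < f b)).simplices,
          (-1 : ℤ) ^ (C.card - 1) = _
      rw [IndexIdentityAux.simplices_induce]
      have hcs : IndexIdentityAux.csum Mset
          = ∑ C ∈ IndexIdentityAux.chains Mset, (-1 : ℤ) ^ (C.card - 1) := rfl
      rw [hcs]
      congr 1
      ext C
      simp only [Finset.mem_filter, IndexIdentityAux.mem_chains,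
        IndexIdentityAux.mem_simplices]
      constructor
      · rintro ⟨⟨hne, hsubv, hadj⟩, hmix⟩
        refine ⟨?_, hne, ?_⟩
        · intro s hs
          rw [hMdef, Finset.mem_filter]
          exact ⟨hsubv hs, hmix s hs⟩
        · intro s hs t ht hst
          exact (hadj s hs t ht hst).2.2
      · rintro ⟨hsubv, hne, hch⟩
        have hmem : ∀ s ∈ C, s ∈ S.simplices ∧
            ((∃ a ∈ s, f a < f x) ∧ ∃ b ∈ s, f x < f b) := by
          intro s hs
          have := hsubv hs
          rw [hMdef, Finset.mem_filter] at this
          exact this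
        refine ⟨⟨hne, fun s hs => (hmem s hs).1, ?_⟩, fun s hs => (hmem s hs).2⟩
        intro s hs t ht hst
        exact ⟨IndexIdentityAux.mem_simplices.mp (hmem s hs).1,
          IndexIdentityAux.mem_simplices.mp (hmem t ht).1, hch s hs t ht hst⟩
    -- Step 3: the hypothesis of csum_eq
    have hhyp : ∀ t ∈ Mset, ∑ s ∈ Mset.filter (· ⊆ t), (-1 : ℤ) ^ s.card = 1 := by
      intro t ht
      rw [hMdef, Finset.mem_filter] at ht
      obtain ⟨htS, htmix⟩ := ht
      have htsimp := IndexIdentityAux.mem_simplices.mp htS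
      have hset : Mset.filter (· ⊆ t) = (t.powerset.filter (fun s => s.Nonempty)).filter
          (fun s => (∃ a ∈ s, f a < f x) ∧ ∃ b ∈ s, f x < f b) := by
        ext s
        rw [hMdef]
        simp only [Finset.mem_filter, Finset.mem_powerset,
          IndexIdentityAux.mem_simplices]
        constructor
        · rintro ⟨⟨hsS, hmix⟩, hst⟩
          exact ⟨⟨hst, hsS.1⟩, hmix⟩
        · rintro ⟨⟨hst, hne⟩, hmix⟩
          exact ⟨⟨IndexIdentityAux.isSimplex_subset htsimp hst hne, hmix⟩, hst⟩
      rw [hset]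
      have hTne : ∀ s ∈ t.powerset.filter (fun s => s.Nonempty),
          s.Nonempty ∧ ∀ a ∈ s, f a ≠ f x := by
        intro s hs
        rw [Finset.mem_filter, Finset.mem_powerset] at hs
        exact ⟨hs.2, fun a ha => hfx a (htsimp.2.1 (hs.1 ha))⟩
      have htri := IndexIdentityAux.tri_split f x _ hTne (fun s => (-1 : ℤ) ^ s.card)
      have htotal := IndexIdentityAux.sum_ne_powerset htsimp.1
      set tneg := t.filter (fun a => f a < f x) with htnegdef
      set tpos := t.filter (fun a => f x < f a) with htposdef
      have hlo : (t.powerset.filter (fun s => s.Nonempty)).filter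
            (fun s => ∀ a ∈ s, f a < f x)
          = tneg.powerset.filter (fun s => s.Nonempty) := by
        ext s
        rw [htnegdef]
        simp only [Finset.mem_filter, Finset.mem_powerset]
        constructor
        · rintro ⟨⟨hst, hne⟩, hall⟩
          exact ⟨fun a ha => Finset.mem_filter.mpr ⟨hst ha, hall a ha⟩, hne⟩
        · rintro ⟨hst, hne⟩
          exact ⟨⟨fun a ha => (Finset.mem_filter.mp (hst ha)).1, hne⟩,
            fun a ha => (Finset.mem_filter.mp (hst ha)).2⟩
      have hhi : (t.powerset.filter (fun s => s.Nonempty)).filter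
            (fun s => ∀ a ∈ s, f x < f a)
          = tpos.powerset.filter (fun s => s.Nonempty) := by
        ext s
        rw [htposdef]
        simp only [Finset.mem_filter, Finset.mem_powerset]
        constructor
        · rintro ⟨⟨hst, hne⟩, hall⟩
          exact ⟨fun a ha => Finset.mem_filter.mpr ⟨hst ha, hall a ha⟩, hne⟩
        · rintro ⟨hst, hne⟩
          exact ⟨⟨fun a ha => (Finset.mem_filter.mp (hst ha)).1, hne⟩,
            fun a ha => (Finset.mem_filter.mp (hst ha)).2⟩
      have htnegne : tneg.Nonempty := by
        obtain ⟨a, ha, hfa⟩ := htmix.1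
        exact ⟨a, Finset.mem_filter.mpr ⟨ha, hfa⟩⟩
      have htposne : tpos.Nonempty := by
        obtain ⟨b, hb, hfb⟩ := htmix.2
        exact ⟨b, Finset.mem_filter.mpr ⟨hb, hfb⟩⟩
      have h1 := IndexIdentityAux.sum_ne_powerset htnegne
      have h2 := IndexIdentityAux.sum_ne_powerset htposne
      rw [hlo, hhi] at htri
      linarith [htri, htotal, h1, h2]
    have hchain := IndexIdentityAux.csum_eq Mset hhyp
    have hflip : ∑ s ∈ Mset, (-1 : ℤ) ^ s.card
        = - ∑ s ∈ Mset, (-1 : ℤ) ^ (s.card - 1) := by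
      rw [← Finset.sum_neg_distrib]
      refine Finset.sum_congr rfl fun s hs => ?_
      have hsM : s ∈ S.simplices := by
        rw [hMdef, Finset.mem_filter] at hs
        exact hs.1
      exact IndexIdentityAux.neg_pow_card (hsimpne s hsM).1
    rw [hB, hchain]
    linarith [step1, hflip]
  refine ⟨key, ?_⟩
  have hq : ((G.subSphere f x).euler : ℚ) + ((G.supSphere f x).euler : ℚ)
      = ((G.sphere x).euler : ℚ) + ((G.centerManifold f x).euler : ℚ) := by
    exact_mod_cast key
  linarith
end
end
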